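/- arXiv:2205.11271 — 13 statements merged into one kernel-verified Lean document; each statement's English description precedes it below -/
import Mathlib

section
/- If H is a hypergraph in which every pair of hyperedges has an empty intersection or intersects in at least two vertices, then H admits a proper 2-coloring, i.e., a 2-coloring of the vertices such that no hyperedge is monochromatic. -/
/-!
Order the vertices linearly (any type can be well-ordered) and colour a vertex `true` exactly
when it is the least vertex of some hyperedge. The least vertex of a hyperedge `e` is then
`true`. Its greatest vertex `v` is `false`: if `v` were the least vertex of a hyperedge `e'`,
every common vertex of `e` and `e'` would be both `≤ v` and `≥ v`, so `e ∩ e' = {v}`, which the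
intersection hypothesis forbids.
-/

open Finset

namespace Finset

variable {α : Type*} [LinearOrder α]

theorem card_inter_le_one_of_isGreatest_of_isLeast {s t : Finset α} {a : α}
    (hs : IsGreatest (s : Set α) a) (ht : IsLeast (t : Set α) a) : #(s ∩ t) ≤ 1 :=
  card_le_one.2 fun x hx y hy => by
    rw [mem_inter] at hx hy
    rw [le_antisymm (hs.2 hx.1) (ht.2 hx.2), le_antisymm (hs.2 hy.1) (ht.2 hy.2)]

end Finset

section MinColoring

variable {α : Type*} [LinearOrder α] {E : Finset (Finset α)} {e : Finset α} {v : α}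

open Classical in
noncomputable def minColoring (E : Finset (Finset α)) (v : α) : Bool :=
  decide (∃ e ∈ E, IsLeast (e : Set α) v)

theorem minColoring_of_isLeast (he : e ∈ E) (hv : IsLeast (e : Set α) v) :
    minColoring E v = true := by
  simpa [minColoring] using ⟨e, he, hv⟩

theorem minColoring_of_isGreatest
    (hint : ∀ e₁ ∈ E, ∀ e₂ ∈ E, e₁ ∩ e₂ = ∅ ∨ 2 ≤ #(e₁ ∩ e₂))
    (he : e ∈ E) (hv : IsGreatest (e : Set α) v) : minColoring E v = false := by
  simp only [minColoring, decide_eq_false_iff_not, not_exists, not_and]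
  intro e' he' hv'
  have hmem : v ∈ e ∩ e' := mem_inter.2 ⟨hv.1, hv'.1⟩
  have hle := card_inter_le_one_of_isGreatest_of_isLeast hv hv'
  rcases hint e he e' he' with hempty | hcard
  · simp [hempty] at hmem
  · omega

theorem minColoring_proper (hsize : ∀ e ∈ E, 2 ≤ #e)
    (hint : ∀ e₁ ∈ E, ∀ e₂ ∈ E, e₁ ∩ e₂ = ∅ ∨ 2 ≤ #(e₁ ∩ e₂)) (he : e ∈ E) :
    ∃ u ∈ e, ∃ w ∈ e, minColoring E u ≠ minColoring E w := by
  have hne : e.Nonempty := card_pos.1 (by have := hsize e he; omega)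
  refine ⟨e.min' hne, e.min'_mem hne, e.max' hne, e.max'_mem hne, ?_⟩
  rw [minColoring_of_isLeast he (e.isLeast_min' hne),
    minColoring_of_isGreatest hint he (e.isGreatest_max' hne)]
  decide

end MinColoring

theorem stmt0_general {V : Type*} [DecidableEq V]
    (E : Finset (Finset V))
    (hsize : ∀ e ∈ E, 2 ≤ e.card)
    (hint : ∀ e₁ ∈ E, ∀ e₂ ∈ E, e₁ ∩ e₂ = ∅ ∨ 2 ≤ (e₁ ∩ e₂).card) :
    ∃ f : V → Bool, ∀ e ∈ E, ∃ u ∈ e, ∃ w ∈ e, f u ≠ f w := by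
  let : LinearOrder V := WellOrderingRel.isWellOrder.linearOrder
  -- `convert` reconciles the given `DecidableEq V` with the classical one of this order.
  exact ⟨minColoring E, fun e he => minColoring_proper hsize (by convert hint) he⟩

/-- If every pair of hyperedges of a hypergraph has empty intersection or intersects
in at least two vertices (and every hyperedge has size at least 2), then the
hypergraph admits a proper 2-coloring. -/
theorem stmt0 {V : Type*} [Fintype V] [DecidableEq V]
    (E : Finset (Finset V))
    (hsize : ∀ e ∈ E, 2 ≤ e.card)
    (hint : ∀ e₁ ∈ E, ∀ e₂ ∈ E, e₁ ∩ e₂ = ∅ ∨ 2 ≤ (e₁ ∩ e₂).card) :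
    ∃ f : V → Bool, ∀ e ∈ E, ∃ u ∈ e, ∃ w ∈ e, f u ≠ f w :=
  stmt0_general E hsize hint
end

section
/- Let H be a directed hypergraph in which every hyperedge has at least one tail-vertex, and such that whenever two hyperedges H_1, H_2 intersect in exactly one vertex v, then v is a head-vertex of both H_1 and H_2. Then H admits a proper 2-coloring. -/
/-!
Take a 2-coloring with an inclusion-minimal set of monochromatic hyperedges and suppose some
hyperedge `e` is still monochromatic. Recolor one tail-vertex `v` of `e`. A hyperedge that is
monochromatic after the recoloring but contains `v` shares no other vertex with `e`, so it meets
`e` exactly in `v`; by hypothesis `v` would then be a head-vertex of `e`, which it is not. Hence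
every hyperedge monochromatic after the recoloring avoids `v` and was already monochromatic,
while `e` no longer is, contradicting minimality.
-/

open Finset Function

section

variable {V α ι : Type*}

def IsMonochromatic (f : V → α) (s : Finset V) : Prop :=
  ∀ u ∈ s, ∀ w ∈ s, f u = f w

namespace IsMonochromatic

variable [DecidableEq V] {f : V → α} {s t : Finset V} {v : V} {c : α}

theorem of_update (h : IsMonochromatic (update f v c) s) (hv : v ∉ s) :
    IsMonochromatic f s := by
  intro u hu w hw
  simpa only [update_of_ne (ne_of_mem_of_not_mem hu hv),
    update_of_ne (ne_of_mem_of_not_mem hw hv)] using h u hu w hw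

theorem inter_eq_singleton_of_update (hs : IsMonochromatic f s)
    (ht : IsMonochromatic (update f v c) t) (hc : c ≠ f v) (hvs : v ∈ s) (hvt : v ∈ t) :
    s ∩ t = {v} := by
  refine eq_singleton_iff_unique_mem.2 ⟨mem_inter.2 ⟨hvs, hvt⟩, fun w hw => ?_⟩
  by_contra hwv
  have hfw : update f v c w = update f v c v := ht w (mem_inter.1 hw).2 v hvt
  rw [update_of_ne hwv, update_self, hs w (mem_inter.1 hw).1 v hvs] at hfw
  exact hc hfw.symm

end IsMonochromatic

open Classical in
noncomputable def monoEdges (f : V → α) (E : Finset ι) (S : ι → Finset V) : Finset ι :=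
  E.filter fun i => IsMonochromatic f (S i)

theorem mem_monoEdges {f : V → α} {E : Finset ι} {S : ι → Finset V} {i : ι} :
    i ∈ monoEdges f E S ↔ i ∈ E ∧ IsMonochromatic f (S i) := by
  classical
  simp only [monoEdges, mem_filter]

theorem monoEdges_update_ssubset [DecidableEq V] {f : V → α} {E : Finset ι}
    {S : ι → Finset V} {i : ι} {v : V} {c : α} (hi : i ∈ monoEdges f E S)
    (hv : v ∈ S i) (hc : c ≠ f v) (hsep : ∀ j ∈ E, S i ∩ S j ≠ {v}) :
    monoEdges (update f v c) E S ⊂ monoEdges f E S := by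
  obtain ⟨-, hmono⟩ := mem_monoEdges.1 hi
  have avoid : ∀ j ∈ monoEdges (update f v c) E S, v ∉ S j := fun j hj hvj =>
    hsep j (mem_monoEdges.1 hj).1
      (hmono.inter_eq_singleton_of_update (mem_monoEdges.1 hj).2 hc hv hvj)
  have hsub : monoEdges (update f v c) E S ⊆ monoEdges f E S := fun j hj =>
    mem_monoEdges.2 ⟨(mem_monoEdges.1 hj).1, (mem_monoEdges.1 hj).2.of_update (avoid j hj)⟩
  exact (ssubset_iff_of_subset hsub).2 ⟨i, hi, fun hi' => avoid i hi' hv⟩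

theorem exists_forall_not_isMonochromatic [DecidableEq V] [Nontrivial α] (E : Finset ι)
    (S : ι → Finset V)
    (hsep : ∀ i ∈ E, ∃ v ∈ S i, ∀ j ∈ E, S i ∩ S j ≠ {v}) :
    ∃ f : V → α, ∀ i ∈ E, ¬IsMonochromatic f (S i) := by
  -- `<` on `Finset ι` is strict inclusion, which is well founded.
  set f := argmin fun g : V → α => monoEdges g E S
  refine ⟨f, fun i hi hmono => ?_⟩
  obtain ⟨v, hv, hvsep⟩ := hsep i hi
  obtain ⟨c, hc⟩ := exists_ne (f v)
  exact not_lt_argmin (fun g : V → α => monoEdges g E S) (update f v c)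
    (monoEdges_update_ssubset (mem_monoEdges.2 ⟨hi, hmono⟩) hv hc hvsep)

end

theorem stmt3_general {V : Type*} [DecidableEq V]
    (E : Finset (Finset V × Finset V))
    (hdisj : ∀ e ∈ E, Disjoint e.1 e.2)
    (htail : ∀ e ∈ E, e.1.Nonempty)
    (hint : ∀ e₁ ∈ E, ∀ e₂ ∈ E, ∀ v : V,
      (e₁.1 ∪ e₁.2) ∩ (e₂.1 ∪ e₂.2) = {v} → v ∈ e₁.2 ∧ v ∈ e₂.2) :
    ∃ f : V → Bool, ∀ e ∈ E, ∃ u ∈ e.1 ∪ e.2, ∃ w ∈ e.1 ∪ e.2, f u ≠ f w := by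
  have hsep : ∀ e ∈ E, ∃ v ∈ e.1 ∪ e.2, ∀ e' ∈ E,
      (e.1 ∪ e.2) ∩ (e'.1 ∪ e'.2) ≠ {v} := by
    intro e he
    obtain ⟨v, hv⟩ := htail e he
    exact ⟨v, mem_union_left _ hv, fun e' he' hinter =>
      disjoint_left.1 (hdisj e he) hv (hint e he e' he' v hinter).1⟩
  obtain ⟨f, hf⟩ := exists_forall_not_isMonochromatic (α := Bool) E (fun e => e.1 ∪ e.2) hsep
  refine ⟨f, fun e he => ?_⟩
  simpa only [IsMonochromatic, not_forall, exists_prop] using hf e he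

/-- A directed hypergraph (each hyperedge is a pair `(tail, head)` of disjoint finsets)
in which every hyperedge has at least one tail-vertex and in which, whenever two
hyperedges intersect in exactly one vertex `v`, the vertex `v` is a head-vertex of
both, admits a proper 2-coloring. -/
theorem stmt3 {V : Type*} [Fintype V] [DecidableEq V]
    (E : Finset (Finset V × Finset V))
    (hdisj : ∀ e ∈ E, Disjoint e.1 e.2)
    (htail : ∀ e ∈ E, e.1.Nonempty)
    (hint : ∀ e₁ ∈ E, ∀ e₂ ∈ E, ∀ v : V,
      (e₁.1 ∪ e₁.2) ∩ (e₂.1 ∪ e₂.2) = {v} → v ∈ e₁.2 ∧ v ∈ e₂.2) :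
    ∃ f : V → Bool, ∀ e ∈ E, ∃ u ∈ e.1 ∪ e.2, ∃ w ∈ e.1 ∪ e.2, f u ≠ f w :=
  stmt3_general E hdisj htail hint
end

section
/- Let H be a k-uniform directed hypergraph on n vertices such that every hyperedge has fewer head-vertices than tail-vertices, and whenever two hyperedges intersect in a single vertex v, v is a head-vertex of at least one of them. Then the number of hyperedges of H is at most C_k · n · k · binom(n, k-2), where C_k is a constant depending only on k; in particular, H has O(n^{k-1}) hyperedges. -/
private lemma recon_aux {V : Type} [DecidableEq V] {S : Finset V} {u v : V}
    (hu : u ∈ S) (hv : v ∈ S) (huv : u ≠ v) :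
    insert u (insert v ((S.erase v).erase u)) = S := by
  rw [Finset.erase_right_comm,
    Finset.insert_erase (Finset.mem_erase.mpr ⟨huv.symm, hv⟩),
    Finset.insert_erase hu]

/-- A `k`-uniform directed hypergraph with Property S (fewer head-vertices than
tail-vertices in each hyperedge, and no two hyperedges intersect in a single vertex
that is a tail-vertex of both) has `O(n^(k-1))` hyperedges, where the constant
depends only on `k`. Hyperedges are pairs `(tail, head)` of disjoint finsets. -/
theorem stmt4 (k : ℕ) :
    ∃ C : ℕ, ∀ (V : Type) [Fintype V] [DecidableEq V]
      (E : Finset (Finset V × Finset V)),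
      (∀ e ∈ E, Disjoint e.1 e.2) →
      (∀ e ∈ E, (e.1 ∪ e.2).card = k) →
      (∀ e ∈ E, e.2.card < e.1.card) →
      (∀ e₁ ∈ E, ∀ e₂ ∈ E, ∀ v : V,
        (e₁.1 ∪ e₁.2) ∩ (e₂.1 ∪ e₂.2) = {v} → v ∈ e₁.2 ∨ v ∈ e₂.2) →
      E.card ≤ C * (Fintype.card V) ^ (k - 1) := by
  refine ⟨2 ^ k * k, ?_⟩
  intro V _ _ E hdisj hcard hlt hS
  set n := Fintype.card V with hn
  rcases Nat.lt_or_ge k 2 with hk | hk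
  · -- k ≤ 1 : E is empty
    have hE : E = ∅ := by
      rw [Finset.eq_empty_iff_forall_notMem]
      intro e he
      have h1 := hcard e he
      have h2 := hlt e he
      have h3 := hdisj e he
      have hsum : e.1.card + e.2.card = k := by
        rw [← Finset.card_union_of_disjoint h3, h1]
      interval_cases k
      · omega
      · have h5 : e.1.card = 1 := by omega
        have h6 : e.2 = ∅ := Finset.card_eq_zero.mp (by omega)
        obtain ⟨t, ht⟩ := Finset.card_eq_one.mp h5
        have := hS e he e he t (by rw [Finset.inter_self, ht, h6, Finset.union_empty])
        rw [h6] at this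
        simp at this
    simp [hE]
  · -- main case k ≥ 2
    have dbound : ∀ v : V,
        (E.filter fun e => v ∈ e.1).card ≤ 2 ^ k * ((k - 1) * n ^ (k - 2)) := by
      intro v
      set F := E.filter fun e => v ∈ e.1 with hF
      rcases F.eq_empty_or_nonempty with h | ⟨e₀, he₀⟩
      · simp [h]
      have he₀E : e₀ ∈ E := (Finset.mem_filter.mp he₀).1
      have hv₀ : v ∈ e₀.1 := (Finset.mem_filter.mp he₀).2
      have hinter : ∀ e ∈ F,
          (((e₀.1 ∪ e₀.2).erase v) ∩ ((e.1 ∪ e.2).erase v)).Nonempty := by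
        intro e he
        have heE : e ∈ E := (Finset.mem_filter.mp he).1
        have hv : v ∈ e.1 := (Finset.mem_filter.mp he).2
        by_contra hemp
        rw [Finset.not_nonempty_iff_eq_empty] at hemp
        have hsingle : (e₀.1 ∪ e₀.2) ∩ (e.1 ∪ e.2) = {v} := by
          ext x
          simp only [Finset.mem_inter, Finset.mem_singleton]
          constructor
          · rintro ⟨hx1, hx2⟩
            by_contra hxv
            have hx : x ∈ ((e₀.1 ∪ e₀.2).erase v) ∩ ((e.1 ∪ e.2).erase v) :=
              Finset.mem_inter.mpr ⟨Finset.mem_erase.mpr ⟨hxv, hx1⟩,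
                Finset.mem_erase.mpr ⟨hxv, hx2⟩⟩
            rw [hemp] at hx
            exact absurd hx (Finset.notMem_empty x)
          · rintro rfl
            exact ⟨Finset.mem_union_left _ hv₀, Finset.mem_union_left _ hv⟩
        rcases hS e₀ he₀E e heE v hsingle with h' | h'
        · exact Finset.disjoint_left.mp (hdisj e₀ he₀E) hv₀ h'
        · exact Finset.disjoint_left.mp (hdisj e heE) hv h'
      -- the encoding map
      set f : Finset V × Finset V → V × Finset V := fun e =>
        if he : e ∈ F then
          ((hinter e he).choose, ((e.1 ∪ e.2).erase v).erase ((hinter e he).choose))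
        else (v, ∅) with hf
      have hfspec : ∀ e ∈ F, (f e).1 ∈ (e₀.1 ∪ e₀.2).erase v ∧
          (f e).1 ∈ (e.1 ∪ e.2).erase v ∧
          (f e).2 = ((e.1 ∪ e.2).erase v).erase (f e).1 := by
        intro e he
        have hch := (hinter e he).choose_spec
        rw [Finset.mem_inter] at hch
        simp only [hf, dif_pos he]
        exact ⟨hch.1, hch.2, trivial⟩
      -- reconstruction of the vertex set from f e
      have hrecon : ∀ e ∈ F, insert (f e).1 (insert v (f e).2) = e.1 ∪ e.2 := by
        intro e he
        obtain ⟨_, h2, h3⟩ := hfspec e he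
        rw [Finset.mem_erase] at h2
        rw [h3]
        exact recon_aux h2.2 (Finset.mem_union_left _ (Finset.mem_filter.mp he).2) h2.1
      -- fiber bound
      have hfib : ∀ b ∈ F.image f, (F.filter fun e => f e = b).card ≤ 2 ^ k := by
        intro b hb
        obtain ⟨e₁, he₁, hfe₁⟩ := Finset.mem_image.mp hb
        have hS₁ : insert b.1 (insert v b.2) = e₁.1 ∪ e₁.2 := by
          rw [← hfe₁]; exact hrecon e₁ he₁
        have hScard : (insert b.1 (insert v b.2)).card = k := by
          rw [hS₁]; exact hcard e₁ (Finset.mem_filter.mp he₁).1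
        calc (F.filter fun e => f e = b).card
            ≤ (insert b.1 (insert v b.2)).powerset.card := by
              apply Finset.card_le_card_of_injOn (fun e => e.2)
              · intro e he
                rw [Finset.mem_coe, Finset.mem_filter] at he
                have hSe : insert b.1 (insert v b.2) = e.1 ∪ e.2 := by
                  rw [← he.2]; exact hrecon e he.1
                rw [Finset.mem_coe, Finset.mem_powerset, hSe]
                exact Finset.subset_union_right
              · intro e he e' he' h22
                simp only [Finset.coe_filter, Set.mem_setOf_eq] at he he'
                have h22' : e.2 = e'.2 := h22
                have hSe : e.1 ∪ e.2 = e'.1 ∪ e'.2 := by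
                  rw [← hrecon e he.1, ← hrecon e' he'.1, he.2, he'.2]
                have hde : Disjoint e.1 e.2 := hdisj e (Finset.mem_filter.mp he.1).1
                have hde' : Disjoint e'.1 e'.2 := hdisj e' (Finset.mem_filter.mp he'.1).1
                have h11 : e.1 = e'.1 := by
                  rw [← Finset.union_sdiff_cancel_right hde,
                    ← Finset.union_sdiff_cancel_right hde', hSe, h22']
                exact Prod.ext h11 h22
          _ = 2 ^ k := by rw [Finset.card_powerset, hScard]
      have hmain := Finset.card_le_mul_card_image F (2 ^ k) hfib
      have himg : (F.image f).card ≤ (k - 1) * n ^ (k - 2) := by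
        have hsub : F.image f ⊆ ((e₀.1 ∪ e₀.2).erase v) ×ˢ
            (Finset.univ.powersetCard (k - 2)) := by
          intro b hb
          obtain ⟨e, he, hfe⟩ := Finset.mem_image.mp hb
          obtain ⟨h1, h2, h3⟩ := hfspec e he
          rw [← hfe]
          rw [Finset.mem_product]
          constructor
          · exact h1
          · rw [Finset.mem_powersetCard]
            refine ⟨Finset.subset_univ _, ?_⟩
            rw [h3, Finset.card_erase_of_mem h2, Finset.card_erase_of_mem
              (Finset.mem_union_left _ (Finset.mem_filter.mp he).2),
              hcard e (Finset.mem_filter.mp he).1]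
            omega
        calc (F.image f).card ≤ _ := Finset.card_le_card hsub
          _ = ((e₀.1 ∪ e₀.2).erase v).card * (Finset.univ.powersetCard (k - 2)).card :=
            Finset.card_product _ _
          _ ≤ (k - 1) * n ^ (k - 2) := by
            apply Nat.mul_le_mul
            · rw [Finset.card_erase_of_mem (Finset.mem_union_left _ hv₀),
                hcard e₀ he₀E]
            · rw [Finset.card_powersetCard, Finset.card_univ, ← hn]
              exact Nat.choose_le_pow _ _
      calc F.card ≤ 2 ^ k * (F.image f).card := hmain
        _ ≤ 2 ^ k * ((k - 1) * n ^ (k - 2)) := Nat.mul_le_mul_left _ himg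
    -- double counting
    have h1 : E.card ≤ ∑ v : V, (E.filter fun e => v ∈ e.1).card := by
      calc E.card = ∑ _e ∈ E, 1 := by simp
        _ ≤ ∑ e ∈ E, e.1.card := Finset.sum_le_sum (fun e he => by
            have := hlt e he; omega)
        _ = ∑ e ∈ E, ∑ v : V, (if v ∈ e.1 then 1 else 0) := by
            refine Finset.sum_congr rfl fun e _ => ?_
            rw [Finset.sum_ite_mem, Finset.univ_inter, Finset.card_eq_sum_ones]
        _ = ∑ v : V, (E.filter fun e => v ∈ e.1).card := by
            rw [Finset.sum_comm]
            exact Finset.sum_congr rfl fun v _ => (Finset.card_filter _ _).symm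
    have hpow : n ^ (k - 2) * n = n ^ (k - 1) := by
      rw [← pow_succ]
      congr 1
      omega
    calc E.card ≤ ∑ v : V, (E.filter fun e => v ∈ e.1).card := h1
      _ ≤ ∑ _v : V, 2 ^ k * ((k - 1) * n ^ (k - 2)) :=
          Finset.sum_le_sum fun v _ => dbound v
      _ = n * (2 ^ k * ((k - 1) * n ^ (k - 2))) := by
          rw [Finset.sum_const, smul_eq_mul, Finset.card_univ]
      _ = 2 ^ k * (k - 1) * n ^ (k - 1) := by rw [← hpow]; ring
      _ ≤ 2 ^ k * k * n ^ (k - 1) :=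
          Nat.mul_le_mul_right _ (Nat.mul_le_mul_left _ (Nat.sub_le k 1))
end

section
/- Let H be a linear directed hypergraph (every two hyperedges share at most one vertex) such that every hyperedge has fewer head-vertices than tail-vertices, and whenever two hyperedges intersect in a single vertex v, v is a head-vertex of at least one of them. Then H admits a proper 2-coloring. -/
/-! Two edges that share a tail vertex `v` would meet exactly in `{v}` by linearity, so `v` would
be a head vertex of one of them, contradicting that tails and heads are disjoint: the tails are
pairwise disjoint. Each tail has at least two vertices (a one-vertex tail forces an empty head, and
the edge meets itself in that vertex). Colouring one chosen vertex of every tail `true` and all other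
vertices `false` therefore leaves no edge monochromatic. -/

theorem Set.PairwiseDisjoint.exists_bool_nonconstant {ι α : Type*} {s : Set ι} {t : ι → Set α}
    (hs : s.PairwiseDisjoint t) (ht : ∀ i ∈ s, (t i).Nontrivial) :
    ∃ f : α → Bool, ∀ i ∈ s, ∃ u ∈ t i, ∃ w ∈ t i, f u ≠ f w := by
  classical
  choose c hc w hw hwc using ht
  refine ⟨fun v => decide (∃ j hj, c j hj = v), fun i hi => ⟨c i hi, hc i hi, w i hi, hw i hi, ?_⟩⟩
  have hcw : ¬∃ j hj, c j hj = w i hi := by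
    rintro ⟨j, hj, hcj⟩
    have hij : i = j := hs.elim_set hi hj (w i hi) (hw i hi) (hcj ▸ hc j hj)
    subst hij
    exact hwc i hi hcj
  simpa [hcw] using ⟨i, hi, rfl⟩

section DirectedHypergraph

variable {V : Type*} [DecidableEq V] {E : Finset (Finset V × Finset V)}

theorem pairwiseDisjoint_tails (hdisj : ∀ e ∈ E, Disjoint e.1 e.2)
    (hlin : ∀ e₁ ∈ E, ∀ e₂ ∈ E, e₁ ≠ e₂ → ((e₁.1 ∪ e₁.2) ∩ (e₂.1 ∪ e₂.2)).card ≤ 1)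
    (hint : ∀ e₁ ∈ E, ∀ e₂ ∈ E, ∀ v : V,
      (e₁.1 ∪ e₁.2) ∩ (e₂.1 ∪ e₂.2) = {v} → v ∈ e₁.2 ∨ v ∈ e₂.2) :
    (E : Set (Finset V × Finset V)).PairwiseDisjoint fun e => (e.1 : Set V) := by
  intro e₁ h₁ e₂ h₂ hne
  simp only [Function.onFun, Finset.disjoint_coe]
  refine Finset.disjoint_left.2 fun v hv₁ hv₂ => ?_
  have hv : v ∈ (e₁.1 ∪ e₁.2) ∩ (e₂.1 ∪ e₂.2) :=
    Finset.mem_inter.2 ⟨Finset.mem_union_left _ hv₁, Finset.mem_union_left _ hv₂⟩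
  have hsing : (e₁.1 ∪ e₁.2) ∩ (e₂.1 ∪ e₂.2) = {v} :=
    Finset.eq_singleton_iff_unique_mem.2
      ⟨hv, fun x hx => Finset.card_le_one.1 (hlin e₁ h₁ e₂ h₂ hne) x hx v hv⟩
  rcases hint e₁ h₁ e₂ h₂ v hsing with h | h
  · exact Finset.disjoint_left.1 (hdisj e₁ h₁) hv₁ h
  · exact Finset.disjoint_left.1 (hdisj e₂ h₂) hv₂ h

theorem tail_nontrivial (hmaj : ∀ e ∈ E, e.2.card < e.1.card)
    (hint : ∀ e₁ ∈ E, ∀ e₂ ∈ E, ∀ v : V,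
      (e₁.1 ∪ e₁.2) ∩ (e₂.1 ∪ e₂.2) = {v} → v ∈ e₁.2 ∨ v ∈ e₂.2)
    {e : Finset V × Finset V} (he : e ∈ E) : e.1.Nontrivial := by
  rw [← Finset.one_lt_card_iff_nontrivial]
  by_contra hle
  have hhead : e.2 = ∅ := Finset.card_eq_zero.1 (by have := hmaj e he; omega)
  obtain ⟨v, hv⟩ := Finset.card_eq_one.1 (by have := hmaj e he; omega : e.1.card = 1)
  have hself : (e.1 ∪ e.2) ∩ (e.1 ∪ e.2) = {v} := by simp [hhead, hv]
  simpa [hhead] using hint e he e he v hself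

end DirectedHypergraph

theorem stmt5_general {V : Type*} [DecidableEq V]
    (E : Finset (Finset V × Finset V))
    (hdisj : ∀ e ∈ E, Disjoint e.1 e.2)
    (hmaj : ∀ e ∈ E, e.2.card < e.1.card)
    (hlin : ∀ e₁ ∈ E, ∀ e₂ ∈ E, e₁ ≠ e₂ →
      ((e₁.1 ∪ e₁.2) ∩ (e₂.1 ∪ e₂.2)).card ≤ 1)
    (hint : ∀ e₁ ∈ E, ∀ e₂ ∈ E, ∀ v : V,
      (e₁.1 ∪ e₁.2) ∩ (e₂.1 ∪ e₂.2) = {v} → v ∈ e₁.2 ∨ v ∈ e₂.2) :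
    ∃ f : V → Bool, ∀ e ∈ E, ∃ u ∈ e.1 ∪ e.2, ∃ w ∈ e.1 ∪ e.2, f u ≠ f w := by
  obtain ⟨f, hf⟩ := (pairwiseDisjoint_tails hdisj hlin hint).exists_bool_nonconstant
    fun e he => tail_nontrivial hmaj hint he
  refine ⟨f, fun e he => ?_⟩
  obtain ⟨u, hu, w, hw, hfuw⟩ := hf e he
  exact ⟨u, Finset.mem_union_left _ hu, w, Finset.mem_union_left _ hw, hfuw⟩

/-- A linear directed hypergraph (any two distinct hyperedges share at most one vertex)
with Property S: every hyperedge has fewer head-vertices than tail-vertices, and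
whenever two hyperedges intersect in a single vertex `v`, `v` is a head-vertex of at
least one of them. Then it admits a proper 2-coloring. Hyperedges are pairs
`(tail, head)` of disjoint finsets. -/
theorem stmt5 {V : Type*} [Fintype V] [DecidableEq V]
    (E : Finset (Finset V × Finset V))
    (hdisj : ∀ e ∈ E, Disjoint e.1 e.2)
    (hmaj : ∀ e ∈ E, e.2.card < e.1.card)
    (hlin : ∀ e₁ ∈ E, ∀ e₂ ∈ E, e₁ ≠ e₂ →
      ((e₁.1 ∪ e₁.2) ∩ (e₂.1 ∪ e₂.2)).card ≤ 1)
    (hint : ∀ e₁ ∈ E, ∀ e₂ ∈ E, ∀ v : V,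
      (e₁.1 ∪ e₁.2) ∩ (e₂.1 ∪ e₂.2) = {v} → v ∈ e₁.2 ∨ v ∈ e₂.2) :
    ∃ f : V → Bool, ∀ e ∈ E, ∃ u ∈ e.1 ∪ e.2, ∃ w ∈ e.1 ∪ e.2, f u ≠ f w :=
  stmt5_general E hdisj hmaj hlin hint
end

section
/- Let F be the oriented 2→1 hypergraph on vertices {1,2,3,4,5} with hyperedges {12→3, 13→4, 23→5, 14→2, 25→1}. The 2→1 hypergraph H on vertex set {1,...,n} consisting, for every triple i<j<k, of the two hyperedges ik→j and jk→i, has 2·binom(n,3) hyperedges and contains no copy of F. Hence ex(n,F) ≥ 2·binom(n,3). -/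
/-!
Every vertex of `F` is the head of one of its hyperedges, while in `H` the head of a hyperedge
is smaller than the larger of its two tail vertices. In a copy of `F` the largest vertex would
therefore be smaller than another vertex of the copy, which is impossible.

For the count, each triple `i < j < k`, i.e. each order embedding `Fin 3 ↪o α`, contributes
the two hyperedges `ik → j` and `jk → i`, and distinct (triple, choice) pairs give distinct
hyperedges.
-/

open Finset Function

section

variable {α : Type*} [LinearOrder α]

def belowMaxEdges (α : Type*) [LinearOrder α] : Set (Finset α × α) :=
  {e | ∃ i j k : α, i < j ∧ j < k ∧ (e = ({i, k}, j) ∨ e = ({j, k}, i))}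

theorem lt_or_lt_of_mem_belowMaxEdges {a b c : α}
    (h : (({a, b} : Finset α), c) ∈ belowMaxEdges α) : c < a ∨ c < b := by
  obtain ⟨i, j, k, hij, hjk, he | he⟩ := h <;>
  · obtain ⟨htail, rfl⟩ := Prod.mk.inj he
    have hk : k ∈ ({a, b} : Finset α) := htail ▸ by simp
    simp only [mem_insert, mem_singleton] at hk
    rcases hk with rfl | rfl
    · exact .inl (by order)
    · exact .inr (by order)

theorem not_forall_exists_mem_of_head_lt {ι : Type*} [Finite ι] [Nonempty ι]
    {E : Set (Finset α × α)} (hE : ∀ a b c, (({a, b} : Finset α), c) ∈ E → c < a ∨ c < b)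
    (v : ι → α) : ¬ ∀ c, ∃ a b, (({v a, v b} : Finset α), v c) ∈ E := by
  intro hv
  obtain ⟨m, hm⟩ := Finite.exists_max v
  obtain ⟨a, b, hab⟩ := hv m
  rcases hE _ _ _ hab with h | h
  · exact (hm a).not_gt h
  · exact (hm b).not_gt h

theorem eq_and_eq_of_pair_eq_pair_of_lt {a b c d : α} (hab : a < b) (hcd : c < d)
    (h : ({a, b} : Finset α) = {c, d}) : a = c ∧ b = d := by
  have hset := congrArg ((↑) : Finset α → Set α) h
  rw [coe_pair, coe_pair] at hset
  rcases Set.pair_eq_pair_iff.1 hset with h' | ⟨rfl, rfl⟩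
  · exact h'
  · exact absurd (hab.trans hcd) (lt_irrefl _)

def tripleEdge (f : Fin 3 ↪o α) : Bool → Finset α × α
  | false => ({f 0, f 2}, f 1)
  | true => ({f 1, f 2}, f 0)

theorem tripleEdge_injective : Injective (uncurry (tripleEdge (α := α))) := by
  have lt01 (f : Fin 3 ↪o α) : f 0 < f 1 := f.strictMono (by decide)
  have lt02 (f : Fin 3 ↪o α) : f 0 < f 2 := f.strictMono (by decide)
  have lt12 (f : Fin 3 ↪o α) : f 1 < f 2 := f.strictMono (by decide)
  have ext {f g : Fin 3 ↪o α} (h0 : f 0 = g 0) (h1 : f 1 = g 1) (h2 : f 2 = g 2) : f = g :=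
    DFunLike.ext _ _ fun i => by fin_cases i <;> assumption
  rintro ⟨f, _ | _⟩ ⟨g, _ | _⟩ h <;> obtain ⟨htail, hhead⟩ := Prod.mk.inj h
  · obtain ⟨h0, h2⟩ := eq_and_eq_of_pair_eq_pair_of_lt (lt02 f) (lt02 g) htail
    exact congrArg (·, false) (ext h0 hhead h2)
  · obtain ⟨h0, -⟩ := eq_and_eq_of_pair_eq_pair_of_lt (lt02 f) (lt12 g) htail
    exact absurd h0 ((lt01 f).trans_eq hhead |>.trans (lt01 g)).ne
  · obtain ⟨h1, -⟩ := eq_and_eq_of_pair_eq_pair_of_lt (lt12 f) (lt02 g) htail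
    exact absurd h1 ((lt01 g).trans_eq hhead.symm |>.trans (lt01 f)).ne'
  · obtain ⟨h1, h2⟩ := eq_and_eq_of_pair_eq_pair_of_lt (lt12 f) (lt12 g) htail
    exact congrArg (·, true) (ext hhead h1 h2)

theorem exists_orderEmbedding_fin_three {i j k : α} (hij : i < j) (hjk : j < k) :
    ∃ f : Fin 3 ↪o α, f 0 = i ∧ f 1 = j ∧ f 2 = k := by
  refine ⟨OrderEmbedding.ofStrictMono ![i, j, k] ?_, rfl, rfl, rfl⟩
  refine Fin.strictMono_iff_lt_succ.2 fun a => ?_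
  fin_cases a
  exacts [hij, hjk]

theorem range_tripleEdge : Set.range (uncurry (tripleEdge (α := α))) = belowMaxEdges α := by
  ext e
  constructor
  · rintro ⟨⟨f, _ | _⟩, rfl⟩
    · exact ⟨f 0, f 1, f 2, f.strictMono (by decide), f.strictMono (by decide), .inl rfl⟩
    · exact ⟨f 0, f 1, f 2, f.strictMono (by decide), f.strictMono (by decide), .inr rfl⟩
  · rintro ⟨i, j, k, hij, hjk, rfl | rfl⟩ <;>
    obtain ⟨f, rfl, rfl, rfl⟩ := exists_orderEmbedding_fin_three hij hjk
    exacts [⟨(f, false), rfl⟩, ⟨(f, true), rfl⟩]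

theorem ncard_belowMaxEdges : (belowMaxEdges α).ncard = 2 * (Nat.card α).choose 3 := by
  rw [← range_tripleEdge, Set.ncard_range_of_injective tripleEdge_injective, Nat.card_prod,
    Nat.card_congr Set.powersetCard.ofFinEmbEquiv, Set.powersetCard.card,
    Nat.card_eq_fintype_card (α := Bool), Fintype.card_bool, mul_comm]

end

/-- The `2→1` hypergraph on `{0,...,n-1}` consisting, for every triple `i<j<k`, of the
two hyperedges `ik→j` and `jk→i`, has `2 * binom(n,3)` hyperedges and contains no copy
of the configuration `F = {12→3, 13→4, 23→5, 14→2, 25→1}`; hence `ex(n,F) ≥ 2*binom(n,3)`. -/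
theorem stmt8 (n : ℕ) (E : Finset (Finset (Fin n) × Fin n))
    (hE : ∀ e, e ∈ E ↔ ∃ i j k : Fin n, i < j ∧ j < k ∧
      (e = (({i, k} : Finset (Fin n)), j) ∨ e = (({j, k} : Finset (Fin n)), i))) :
    E.card = 2 * Nat.choose n 3 ∧
    ¬ ∃ v : Fin 5 → Fin n, Function.Injective v ∧
      (({v 0, v 1} : Finset (Fin n)), v 2) ∈ E ∧
      (({v 0, v 2} : Finset (Fin n)), v 3) ∈ E ∧
      (({v 1, v 2} : Finset (Fin n)), v 4) ∈ E ∧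
      (({v 0, v 3} : Finset (Fin n)), v 1) ∈ E ∧
      (({v 1, v 4} : Finset (Fin n)), v 0) ∈ E := by
  have hE' : (E : Set (Finset (Fin n) × Fin n)) = belowMaxEdges (Fin n) := Set.ext hE
  refine ⟨?_, ?_⟩
  · rw [← Set.ncard_coe_finset, hE', ncard_belowMaxEdges, Nat.card_fin]
  · rintro ⟨v, -, e₁, e₂, e₃, e₄, e₅⟩
    refine not_forall_exists_mem_of_head_lt (E := (E : Set _))
      (fun _ _ _ h => lt_or_lt_of_mem_belowMaxEdges (hE' ▸ h)) v fun c => ?_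
    fin_cases c
    exacts [⟨1, 4, e₅⟩, ⟨0, 3, e₄⟩, ⟨0, 1, e₁⟩, ⟨0, 2, e₂⟩, ⟨1, 2, e₃⟩]
end

section
/- For every k ≥ 2 there exists a directed hypergraph H such that every hyperedge has exactly k head-vertices and k tail-vertices, whenever two hyperedges intersect in exactly one vertex that vertex is a head-vertex of at least one of them, and yet H admits no proper 2-coloring. Concretely: take V = V_0 ∪ V_1 ∪ V_2 with |V_i| = 2k-1 disjoint, and for each i ∈ {0,1,2} and each pair of k-subsets A ⊆ V_i, B ⊆ V_{i+1 mod 3}, the hyperedge with head A and tail B. This H has no proper 2-coloring. -/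
/-!
Every hyperedge has its head in a part `Vᵢ` and its tail in `Vᵢ₊₁`. Two hyperedges sharing a
tail vertex come from the same `i`, so their heads are two `k`-subsets of the `(2k-1)`-set `Vᵢ`
and meet as well; hence a single common vertex is never a tail vertex of both. On the other
hand, a 2-coloring has a majority color on each part, occupying at least `k` of its `2k-1`
vertices, and two of the three cyclically consecutive parts share their majority color;
together they contain a monochromatic hyperedge.
-/

open Finset

/-- Hyperedges are pairs `(tail, head)`. -/
def cyclicHyperedges (m k : ℕ) : Set (Finset (Fin 3 × Fin m) × Finset (Fin 3 × Fin m)) :=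
  {e | ∃ i : Fin 3, (∀ v ∈ e.2, v.1 = i) ∧ (∀ v ∈ e.1, v.1 = i + 1) ∧
    e.2.card = k ∧ e.1.card = k}

lemma Fin.three_add_one_ne (i : Fin 3) : i + 1 ≠ i := by
  revert i; decide

lemma Fin.three_exists_apply_eq_apply_add_one (c : Fin 3 → Bool) : ∃ i, c i = c (i + 1) := by
  revert c; decide

lemma Finset.exists_le_card_filter_eq_of_two_mul_le {α : Type*} (s : Finset α) (f : α → Bool)
    {k : ℕ} (hs : 2 * k ≤ s.card + 1) : ∃ b, k ≤ (s.filter (f · = b)).card := by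
  by_contra! h
  have := s.card_filter_add_card_filter_not (f · = true)
  simp only [Bool.not_eq_true] at this
  have := h true
  have := h false
  omega

namespace cyclicHyperedges

variable {m k : ℕ}

lemma disjoint {e} (he : e ∈ cyclicHyperedges m k) : Disjoint e.1 e.2 := by
  obtain ⟨i, hhead, htail, -, -⟩ := he
  exact disjoint_left.2 fun v hv₁ hv₂ =>
    Fin.three_add_one_ne i ((htail v hv₁).symm.trans (hhead v hv₂))

lemma card_fst {e} (he : e ∈ cyclicHyperedges m k) : e.1.card = k := by
  obtain ⟨_, -, -, -, hcard⟩ := he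
  exact hcard

lemma card_snd {e} (he : e ∈ cyclicHyperedges m k) : e.2.card = k := by
  obtain ⟨_, -, -, hcard, -⟩ := he
  exact hcard

lemma mem_snd_or_mem_snd_of_inter_eq_singleton {e₁ e₂} (hm : m < 2 * k)
    (he₁ : e₁ ∈ cyclicHyperedges m k) (he₂ : e₂ ∈ cyclicHyperedges m k) {v}
    (hv : (e₁.1 ∪ e₁.2) ∩ (e₂.1 ∪ e₂.2) = {v}) : v ∈ e₁.2 ∨ v ∈ e₂.2 := by
  obtain ⟨i, hhead₁, htail₁, hcard₁, -⟩ := he₁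
  obtain ⟨i₂, hhead₂, htail₂, hcard₂, -⟩ := he₂
  have hmem : ∀ {w}, w ∈ e₁.1 ∪ e₁.2 → w ∈ e₂.1 ∪ e₂.2 → w = v :=
    fun h₁ h₂ => mem_singleton.1 (hv ▸ mem_inter.2 ⟨h₁, h₂⟩)
  have hv₁ : v ∈ e₁.1 ∪ e₁.2 := (mem_inter.1 (hv ▸ mem_singleton_self v)).1
  have hv₂ : v ∈ e₂.1 ∪ e₂.2 := (mem_inter.1 (hv ▸ mem_singleton_self v)).2
  by_contra! hnot
  have hvt₁ : v ∈ e₁.1 := (mem_union.1 hv₁).resolve_right hnot.1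
  have hvt₂ : v ∈ e₂.1 := (mem_union.1 hv₂).resolve_right hnot.2
  obtain rfl : i = i₂ := add_right_cancel ((htail₁ v hvt₁).symm.trans (htail₂ v hvt₂))
  have hsub : ∀ {s : Finset (Fin 3 × Fin m)}, (∀ w ∈ s, w.1 = i) → s ⊆ {i} ×ˢ univ :=
    fun hs w hw => mem_product.2 ⟨mem_singleton.2 (hs w hw), mem_univ _⟩
  obtain ⟨w, hw⟩ := inter_nonempty_of_card_lt_card_add_card (hsub hhead₁) (hsub hhead₂)
    (by
      rw [card_product, card_singleton, card_univ, Fintype.card_fin, hcard₁, hcard₂]; omega)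
  have hwv : w = v := hmem (mem_union_right _ (mem_inter.1 hw).1)
    (mem_union_right _ (mem_inter.1 hw).2)
  apply Fin.three_add_one_ne i
  rw [← htail₁ v hvt₁, ← hwv, hhead₁ w (mem_inter.1 hw).1]

lemma exists_monochromatic (hm : 2 * k ≤ m + 1) (f : Fin 3 × Fin m → Bool) :
    ∃ e ∈ cyclicHyperedges m k, ∃ b, ∀ v ∈ e.1 ∪ e.2, f v = b := by
  have hmajority (i : Fin 3) : ∃ b, k ≤ (({i} ×ˢ univ).filter (f · = b)).card :=
    exists_le_card_filter_eq_of_two_mul_le _ f (by simpa using hm)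
  choose c hc using hmajority
  obtain ⟨i, hci⟩ := Fin.three_exists_apply_eq_apply_add_one c
  obtain ⟨head, hhead, hhead_card⟩ := exists_subset_card_eq (hc i)
  obtain ⟨tail, htail, htail_card⟩ := exists_subset_card_eq (hc (i + 1))
  have hpart {j b} {s : Finset (Fin 3 × Fin m)} (hs : s ⊆ ({j} ×ˢ univ).filter (f · = b)) :
      ∀ v ∈ s, v.1 = j ∧ f v = b := fun v hv => by
    simpa only [mem_filter, mem_product, mem_singleton, mem_univ, and_true] using hs hv
  refine ⟨(tail, head), ⟨i, fun v hv => (hpart hhead v hv).1, fun v hv => (hpart htail v hv).1,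
    hhead_card, htail_card⟩, c i, fun v hv => ?_⟩
  rcases mem_union.1 hv with hv | hv
  · exact hci ▸ (hpart htail v hv).2
  · exact (hpart hhead v hv).2

end cyclicHyperedges

/-- For every `k ≥ 2` there is a directed hypergraph in which every hyperedge has
exactly `k` head-vertices and `k` tail-vertices, whenever two hyperedges intersect in
exactly one vertex that vertex is a head-vertex of at least one of them, and which has
no proper 2-coloring. Concretely, on `V = V₀ ∪ V₁ ∪ V₂` with `|Vᵢ| = 2k-1`, take for
each `i` all hyperedges with head a `k`-subset of `Vᵢ` and tail a `k`-subset of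
`V_{i+1}`. Hyperedges are pairs `(tail, head)`. -/
theorem stmt10 (k : ℕ) (hk : 2 ≤ k) :
    ∃ E : Set (Finset (Fin 3 × Fin (2 * k - 1)) × Finset (Fin 3 × Fin (2 * k - 1))),
      (∀ e, e ∈ E ↔ ∃ i : Fin 3,
        (∀ v ∈ e.2, v.1 = i) ∧ (∀ v ∈ e.1, v.1 = i + 1) ∧
        e.2.card = k ∧ e.1.card = k) ∧
      (∀ e ∈ E, Disjoint e.1 e.2 ∧ e.1.card = k ∧ e.2.card = k) ∧
      (∀ e₁ ∈ E, ∀ e₂ ∈ E, ∀ v,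
        (e₁.1 ∪ e₁.2) ∩ (e₂.1 ∪ e₂.2) = {v} → v ∈ e₁.2 ∨ v ∈ e₂.2) ∧
      ¬ ∃ f : Fin 3 × Fin (2 * k - 1) → Bool,
        ∀ e ∈ E, ∃ u ∈ e.1 ∪ e.2, ∃ w ∈ e.1 ∪ e.2, f u ≠ f w := by
  refine ⟨cyclicHyperedges (2 * k - 1) k, fun _ => Iff.rfl,
    fun _ he => ⟨cyclicHyperedges.disjoint he, cyclicHyperedges.card_fst he,
      cyclicHyperedges.card_snd he⟩,
    fun _ he₁ _ he₂ _ =>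
      cyclicHyperedges.mem_snd_or_mem_snd_of_inter_eq_singleton (by omega) he₁ he₂, ?_⟩
  rintro ⟨f, hproper⟩
  obtain ⟨e, he, b, hmono⟩ := cyclicHyperedges.exists_monochromatic (k := k) (by omega) f
  obtain ⟨u, hu, w, hw, hne⟩ := hproper e he
  exact hne ((hmono u hu).trans (hmono w hw).symm)
end

section
/- Let G be a good labeled simple graph (every 2-path with differently labeled edges a–x–b satisfies l(ax)=b or l(xb)=a, and no edge has a label equal to one of its endpoints). If a vertex x is incident to edges with exactly 3 different labels, then x has exactly 3 incident edges, and they have the form: edge xa with label b, edge xb with label c, edge xc with label a, for some distinct vertices a, b, c. -/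
/-! Fix `x` and view the labels `u ↦ l x u` of the edges at `x` as a map `f` on the
neighbourhood of `x`. Goodness of the 2-paths `u–x–v` says that two neighbours with
different labels are joined by an arrow of `f`. Three neighbours with pairwise different
labels therefore form an oriented 3-cycle of `f`, and then any neighbour `y` sharing the
label `f a = b` of a cycle vertex `a` must be `a` itself: the labels of `y` and of `c = f⁻¹ a`
differ, so `f y = c` or `f c = y`, and only the latter is consistent. -/

def IsGoodStar {V : Type*} (N : V → Prop) (f : V → V) : Prop :=
  ∀ u v, N u → N v → u ≠ v → f u ≠ f v → f u = v ∨ f v = u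

namespace IsGoodStar

variable {V : Type*} {N : V → Prop} {f : V → V}

theorem cycle_or_cycle (hf : IsGoodStar N f) {a b c : V} (ha : N a) (hb : N b) (hc : N c)
    (hab : f a ≠ f b) (hac : f a ≠ f c) (hbc : f b ≠ f c) :
    (f a = b ∧ f b = c ∧ f c = a) ∨ (f a = c ∧ f c = b ∧ f b = a) := by
  have nab : a ≠ b := ne_of_apply_ne f hab
  have nac : a ≠ c := ne_of_apply_ne f hac
  have nbc : b ≠ c := ne_of_apply_ne f hbc
  rcases hf a b ha hb nab hab with hab' | hba'
  · have hca : f c = a := (hf a c ha hc nac hac).resolve_left fun h => nbc (hab'.symm.trans h)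
    have hbc' : f b = c := (hf b c hb hc nbc hbc).resolve_right fun h => nab (hca.symm.trans h)
    exact Or.inl ⟨hab', hbc', hca⟩
  · have hcb : f c = b := (hf b c hb hc nbc hbc).resolve_left fun h => nac (hba'.symm.trans h)
    have hac' : f a = c := (hf a c ha hc nac hac).resolve_right fun h => nab (hcb.symm.trans h).symm
    exact Or.inr ⟨hac', hcb, hba'⟩

theorem eq_of_apply_eq_of_cycle (hf : IsGoodStar N f) (hfix : ∀ u, N u → f u ≠ u)
    {a b c y : V} (ha : N a) (hb : N b) (hc : N c) (hy : N y)
    (hab : f a = b) (hbc : f b = c) (hca : f c = a) (hya : f y = f a) : y = a := by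
  have nab : a ≠ b := fun h => hfix a ha (hab.trans h.symm)
  have nbc : b ≠ c := fun h => hfix b hb (hbc.trans h.symm)
  rw [hab] at hya
  have nyc : y ≠ c := by
    rintro rfl
    exact nab (hca.symm.trans hya)
  rcases hf y c hy hc nyc (by rw [hya, hca]; exact nab.symm) with h | h
  · exact absurd (hya.symm.trans h) nbc
  · exact (hca.symm.trans h).symm

theorem forall_iff_of_cycle (hf : IsGoodStar N f) (hfix : ∀ u, N u → f u ≠ u)
    {a b c : V} (ha : N a) (hb : N b) (hc : N c)
    (hab : f a = b) (hbc : f b = c) (hca : f c = a)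
    (hall : ∀ y, N y → f y = f a ∨ f y = f b ∨ f y = f c) :
    ∀ y, N y ↔ y = a ∨ y = b ∨ y = c := by
  intro y
  refine ⟨fun hy => ?_, by rintro (rfl | rfl | rfl) <;> assumption⟩
  rcases hall y hy with h | h | h
  · exact Or.inl (hf.eq_of_apply_eq_of_cycle hfix ha hb hc hy hab hbc hca h)
  · exact Or.inr (Or.inl (hf.eq_of_apply_eq_of_cycle hfix hb hc ha hy hbc hca hab h))
  · exact Or.inr (Or.inr (hf.eq_of_apply_eq_of_cycle hfix hc ha hb hy hca hab hbc h))

end IsGoodStar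

theorem isGoodStar_of_good {V : Type*} {Adj : V → V → Prop} {l : V → V → V}
    (hsymm : ∀ a b, Adj a b → Adj b a) (hlsymm : ∀ a b, Adj a b → l a b = l b a)
    (hgood : ∀ a x b, a ≠ b → Adj a x → Adj x b → l a x ≠ l x b →
      l a x = b ∨ l x b = a)
    (x : V) : IsGoodStar (Adj x) (l x) := by
  intro u v hu hv huv hl
  rw [hlsymm x u hu] at hl ⊢
  exact hgood u x v huv (hsymm x u hu) hv hl

theorem stmt13_general {V : Type*} (Adj : V → V → Prop) (l : V → V → V)
    (hsymm : ∀ a b, Adj a b → Adj b a)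
    (hlsymm : ∀ a b, Adj a b → l a b = l b a)
    (hself : ∀ a b, Adj a b → l a b ≠ a ∧ l a b ≠ b)
    (hgood : ∀ a x b, a ≠ b → Adj a x → Adj x b → l a x ≠ l x b →
      l a x = b ∨ l x b = a)
    (x : V)
    (h3 : ∃ a b c : V, Adj x a ∧ Adj x b ∧ Adj x c ∧
      l x a ≠ l x b ∧ l x a ≠ l x c ∧ l x b ≠ l x c ∧
      (∀ y, Adj x y → l x y = l x a ∨ l x y = l x b ∨ l x y = l x c)) :
    ∃ a b c : V, a ≠ b ∧ a ≠ c ∧ b ≠ c ∧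
      (∀ y, Adj x y ↔ (y = a ∨ y = b ∨ y = c)) ∧
      l x a = b ∧ l x b = c ∧ l x c = a := by
  obtain ⟨a, b, c, ha, hb, hc, hab, hac, hbc, hall⟩ := h3
  have hf := isGoodStar_of_good hsymm hlsymm hgood x
  have hfix : ∀ u, Adj x u → l x u ≠ u := fun u hu => (hself x u hu).2
  rcases hf.cycle_or_cycle ha hb hc hab hac hbc with ⟨h₁, h₂, h₃⟩ | ⟨h₁, h₂, h₃⟩
  · exact ⟨a, b, c, ne_of_apply_ne _ hab, ne_of_apply_ne _ hac, ne_of_apply_ne _ hbc,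
      hf.forall_iff_of_cycle hfix ha hb hc h₁ h₂ h₃ hall, h₁, h₂, h₃⟩
  · exact ⟨a, c, b, ne_of_apply_ne _ hac, ne_of_apply_ne _ hab, ne_of_apply_ne _ hbc.symm,
      hf.forall_iff_of_cycle hfix ha hc hb h₁ h₂ h₃ fun y hy => by
        rcases hall y hy with h | h | h <;> tauto, h₁, h₂, h₃⟩

/-- In a good labeled simple graph, if a vertex `x` is incident to edges with exactly
3 different labels, then `x` has exactly 3 incident edges and they have the form
`xa` with label `b`, `xb` with label `c`, `xc` with label `a`. -/
theorem stmt13 {V : Type*} (Adj : V → V → Prop) (l : V → V → V)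
    (hsymm : ∀ a b, Adj a b → Adj b a)
    (hirr : ∀ a, ¬ Adj a a)
    (hlsymm : ∀ a b, Adj a b → l a b = l b a)
    (hself : ∀ a b, Adj a b → l a b ≠ a ∧ l a b ≠ b)
    (hgood : ∀ a x b, a ≠ b → Adj a x → Adj x b → l a x ≠ l x b →
      l a x = b ∨ l x b = a)
    (x : V)
    (h3 : ∃ a b c : V, Adj x a ∧ Adj x b ∧ Adj x c ∧
      l x a ≠ l x b ∧ l x a ≠ l x c ∧ l x b ≠ l x c ∧
      (∀ y, Adj x y → l x y = l x a ∨ l x y = l x b ∨ l x y = l x c)) :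
    ∃ a b c : V, a ≠ b ∧ a ≠ c ∧ b ≠ c ∧
      (∀ y, Adj x y ↔ (y = a ∨ y = b ∨ y = c)) ∧
      l x a = b ∧ l x b = c ∧ l x c = a :=
  stmt13_general Adj l hsymm hlsymm hself hgood x h3
end

section
/- Let G be a good labeled simple graph (every 2-path a–x–b with differently labeled edges satisfies l(ax)=b or l(xb)=a, and no edge's label equals one of its endpoints). If a vertex x is incident to edges of exactly 2 different labels, say labels p and q, then one of these labels, say q, appears on exactly one edge incident to x, and the other endpoint of that edge is p. -/
theorem label_eq_or_label_eq_of_label_ne {V : Type*} {Adj : V → V → Prop} {l : V → V → V}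
    (hsymm : ∀ a b, Adj a b → Adj b a)
    (hlsymm : ∀ a b, Adj a b → l a b = l b a)
    (hgood : ∀ a x b, a ≠ b → Adj a x → Adj x b → l a x ≠ l x b →
      l a x = b ∨ l x b = a)
    {x y z : V} (hy : Adj x y) (hz : Adj x z) (hne : l x y ≠ l x z) :
    l x y = z ∨ l x z = y := by
  have hyz : y ≠ z := by rintro rfl; exact hne rfl
  rw [hlsymm x y hy] at hne ⊢
  exact hgood y x z hyz (hsymm x y hy) hz hne

theorem stmt14_general {V : Type*} (Adj : V → V → Prop) (l : V → V → V)
    (hsymm : ∀ a b, Adj a b → Adj b a)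
    (hlsymm : ∀ a b, Adj a b → l a b = l b a)
    (hgood : ∀ a x b, a ≠ b → Adj a x → Adj x b → l a x ≠ l x b →
      l a x = b ∨ l x b = a)
    (x p q : V) (hpq : p ≠ q) :
    (∀ y, Adj x y → l x y = q → y = p) ∨ (∀ y, Adj x y → l x y = p → y = q) := by
  by_contra! h
  obtain ⟨⟨z, hz, hzq, hzp⟩, ⟨y, hy, hyp, hyq⟩⟩ := h
  have hne : l x y ≠ l x z := by rwa [hyp, hzq]
  rcases label_eq_or_label_eq_of_label_ne hsymm hlsymm hgood hy hz hne with hyz | hzy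
  · exact hzp (hyz ▸ hyp)
  · exact hyq (hzy ▸ hzq)

/-- In a good labeled simple graph, if a vertex `x` is incident to edges of exactly two
different labels `p` and `q`, then one of these labels appears on exactly one edge
incident to `x`, and the other endpoint of this edge is the other label. -/
theorem stmt14 {V : Type*} (Adj : V → V → Prop) (l : V → V → V)
    (hsymm : ∀ a b, Adj a b → Adj b a)
    (hirr : ∀ a, ¬ Adj a a)
    (hlsymm : ∀ a b, Adj a b → l a b = l b a)
    (hself : ∀ a b, Adj a b → l a b ≠ a ∧ l a b ≠ b)
    (hgood : ∀ a x b, a ≠ b → Adj a x → Adj x b → l a x ≠ l x b →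
      l a x = b ∨ l x b = a)
    (x p q : V) (hpq : p ≠ q)
    (hp : ∃ y, Adj x y ∧ l x y = p)
    (hq : ∃ y, Adj x y ∧ l x y = q)
    (honly : ∀ y, Adj x y → l x y = p ∨ l x y = q) :
    (∀ y, Adj x y → l x y = q → y = p) ∨ (∀ y, Adj x y → l x y = p → y = q) :=
  stmt14_general Adj l hsymm hlsymm hgood x p q hpq
end

section
/- Let G be the labeled graph of a 2→1 hypergraph with Property S and with at most one hyperedge per 3-element vertex set. Then no two overloaded pairs of vertices share a vertex: if {x,y} and {y,z} are both pairs joined by at least two parallel edges, then a contradiction arises. -/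
/-!
Fix the path `x – y – z` and labels `c` on `{x, y}`, `d` on `{y, z}`. Unless `c = z`, `d = x`
or `c = d`, the hyperedges `{x, y, c}` and `{y, z, d}` meet exactly in `y`, which heads neither,
so Property S forces `c = d` whenever `c ≠ z` and `d ≠ x`. The hyperedges `xy → z` and `yz → x`
live on the same 3-set, so they cannot both occur. If `xy → z` is absent, both labels of
`{x, y}` equal a label of `{y, z}` other than `x`; otherwise both labels of `{y, z}` equal a
label of `{x, y}` other than `z`.
-/

namespace Hypergraph21

variable {V : Type*} [DecidableEq V]

def PropertyS (H : Set (Finset V × V)) : Prop :=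
  ∀ e₁ ∈ H, ∀ e₂ ∈ H, ∀ v : V,
    (insert e₁.2 e₁.1) ∩ (insert e₂.2 e₂.1) = {v} → v = e₁.2 ∨ v = e₂.2

variable {H : Set (Finset V × V)} {x y z c d : V}

theorem PropertyS.label_eq (hS : PropertyS H) (hhead : ∀ e ∈ H, e.2 ∉ e.1) (hxz : x ≠ z)
    (hc : (({x, y} : Finset V), c) ∈ H) (hd : (({y, z} : Finset V), d) ∈ H)
    (hcz : c ≠ z) (hdx : d ≠ x) : c = d := by
  by_contra hcd
  have hcxy := hhead _ hc
  have hdyz := hhead _ hd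
  simp only [Finset.mem_insert, Finset.mem_singleton, not_or] at hcxy hdyz
  have hinter : (insert c {x, y} : Finset V) ∩ insert d {y, z} = {y} := by
    ext a
    simp only [Finset.mem_inter, Finset.mem_insert, Finset.mem_singleton]
    constructor
    · rintro ⟨ha | ha | ha, ha' | ha' | ha'⟩ <;> subst ha <;> tauto
    · rintro rfl
      tauto
  rcases hS _ hc _ hd y hinter with h | h
  · exact hcxy.2 h.symm
  · exact hdyz.1 h.symm

theorem rotate_notMem
    (huniq : ∀ e₁ ∈ H, ∀ e₂ ∈ H, insert e₁.2 e₁.1 = insert e₂.2 e₂.1 → e₁ = e₂)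
    (hxz : x ≠ z) (h : (({x, y} : Finset V), z) ∈ H) : (({y, z} : Finset V), x) ∉ H := by
  intro h'
  have hsupp : (insert z {x, y} : Finset V) = insert x {y, z} := by
    ext a
    simp only [Finset.mem_insert, Finset.mem_singleton]
    tauto
  exact hxz (congrArg Prod.snd (huniq _ h _ h' hsupp)).symm

end Hypergraph21

open Hypergraph21 in
theorem stmt15_general {V : Type*} [DecidableEq V] (H : Set (Finset V × V))
    (hedge : ∀ e ∈ H, e.1.card = 2 ∧ e.2 ∉ e.1)
    (huniq : ∀ e₁ ∈ H, ∀ e₂ ∈ H, insert e₁.2 e₁.1 = insert e₂.2 e₂.1 → e₁ = e₂)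
    (hS : ∀ e₁ ∈ H, ∀ e₂ ∈ H, ∀ v : V,
      (insert e₁.2 e₁.1) ∩ (insert e₂.2 e₂.1) = {v} → v = e₁.2 ∨ v = e₂.2)
    (x y z : V) (hxz : x ≠ z)
    (c₁ c₂ d₁ d₂ : V) (hc : c₁ ≠ c₂) (hd : d₁ ≠ d₂)
    (h1 : (({x, y} : Finset V), c₁) ∈ H) (h2 : (({x, y} : Finset V), c₂) ∈ H)
    (h3 : (({y, z} : Finset V), d₁) ∈ H) (h4 : (({y, z} : Finset V), d₂) ∈ H) :
    False := by
  have key : ∀ {c d : V}, (({x, y} : Finset V), c) ∈ H → (({y, z} : Finset V), d) ∈ H →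
      c ≠ z → d ≠ x → c = d :=
    PropertyS.label_eq hS (fun e he => (hedge e he).2) hxz
  by_cases hz : (({x, y} : Finset V), z) ∈ H
  · have hx := rotate_notMem huniq hxz hz
    have hd₁ : d₁ ≠ x := by rintro rfl; exact hx h3
    have hd₂ : d₂ ≠ x := by rintro rfl; exact hx h4
    rcases hc.ne_or_ne z with hcz | hcz
    · exact hd ((key h1 h3 hcz hd₁).symm.trans (key h1 h4 hcz hd₂))
    · exact hd ((key h2 h3 hcz hd₁).symm.trans (key h2 h4 hcz hd₂))
  · have hc₁ : c₁ ≠ z := by rintro rfl; exact hz h1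
    have hc₂ : c₂ ≠ z := by rintro rfl; exact hz h2
    rcases hd.ne_or_ne x with hdx | hdx
    · exact hc ((key h1 h3 hc₁ hdx).trans (key h2 h3 hc₂ hdx).symm)
    · exact hc ((key h1 h4 hc₁ hdx).trans (key h2 h4 hc₂ hdx).symm)

/-- In the labeled multigraph of a `2→1` hypergraph with Property S and with at most
one hyperedge per 3-element vertex set, no two overloaded pairs (pairs carrying
parallel edges) share a vertex. -/
theorem stmt15 {V : Type*} [DecidableEq V] (H : Set (Finset V × V))
    (hedge : ∀ e ∈ H, e.1.card = 2 ∧ e.2 ∉ e.1)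
    (huniq : ∀ e₁ ∈ H, ∀ e₂ ∈ H, insert e₁.2 e₁.1 = insert e₂.2 e₂.1 → e₁ = e₂)
    (hS : ∀ e₁ ∈ H, ∀ e₂ ∈ H, ∀ v : V,
      (insert e₁.2 e₁.1) ∩ (insert e₂.2 e₂.1) = {v} → v = e₁.2 ∨ v = e₂.2)
    (x y z : V) (hxy : x ≠ y) (hyz : y ≠ z) (hxz : x ≠ z)
    (c₁ c₂ d₁ d₂ : V) (hc : c₁ ≠ c₂) (hd : d₁ ≠ d₂)
    (h1 : (({x, y} : Finset V), c₁) ∈ H) (h2 : (({x, y} : Finset V), c₂) ∈ H)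
    (h3 : (({y, z} : Finset V), d₁) ∈ H) (h4 : (({y, z} : Finset V), d₂) ∈ H) :
    False :=
  stmt15_general H hedge huniq hS x y z hxz c₁ c₂ d₁ d₂ hc hd h1 h2 h3 h4
end

section
/- Let G be the labeled multigraph of a 2→1 hypergraph with Property S and at most one hyperedge per 3-set. If {x,y} is a strong overloaded pair (there are parallel edges on {x,y} and every edge on {x,y} has a label appearing on some other edge incident to x or y), then there are exactly two parallel edges on {x,y}, with labels r and q, the only other edges incident to x or y are an edge xq with label r and an edge yr with label q, and no further edges of G are incident to x or y. -/
/-!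
Property S says that two edges `xa`, `xb` at a common vertex with different labels have
`l(xa) = b` or `l(xb) = a`. Applied to the strong witness of a parallel label `c` on `{x, y}`
against the other parallel edge `xy` with label `c'`, it shows that the witness is the edge
`xc'` or `yc'` labelled `c`. The two witnesses cannot sit at the same endpoint, since `xc'`
labelled `c` and `xc` labelled `c'` span the same 3-set; this gives the configuration
`xy:r, xy:q, xq:r, yr:q`. Any other edge at `x` is then excluded by Property S against these
three edges at `x`, and the configuration is invariant under `x ↔ y, r ↔ q`.
-/

section

variable {V : Type*} [DecidableEq V]

theorem Finset.exists_eq_pair_of_mem_of_card_eq_two {s : Finset V} (hs : s.card = 2) {x : V}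
    (hx : x ∈ s) : ∃ a, s = {x, a} := by
  obtain ⟨u, v, -, rfl⟩ := Finset.card_eq_two.mp hs
  rcases Finset.mem_insert.mp hx with rfl | hx
  · exact ⟨v, rfl⟩
  obtain rfl := Finset.mem_singleton.mp hx
  exact ⟨u, Finset.pair_comm u x⟩

/-- A hyperedge `ab → c` is encoded as `({a, b}, c)`, i.e. as the edge `{a, b}` labelled `c`. -/
def IsTwoToOne (H : Set (Finset V × V)) : Prop :=
  ∀ e ∈ H, e.1.card = 2 ∧ e.2 ∉ e.1

def vertexSet (e : Finset V × V) : Finset V :=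
  insert e.2 e.1

def HasPropertyS (H : Set (Finset V × V)) : Prop :=
  ∀ e₁ ∈ H, ∀ e₂ ∈ H, ∀ v : V, vertexSet e₁ ∩ vertexSet e₂ = {v} → v = e₁.2 ∨ v = e₂.2

variable {H : Set (Finset V × V)}

namespace IsTwoToOne

theorem ne_of_mem (hH : IsTwoToOne H) {a b c : V} (h : (({a, b} : Finset V), c) ∈ H) :
    a ≠ b ∧ c ≠ a ∧ c ≠ b := by
  obtain ⟨hcard, hlabel⟩ := hH _ h
  refine ⟨?_, ?_, ?_⟩ <;> rintro rfl <;> simp_all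

theorem swap_label_not_mem (hH : IsTwoToOne H) (hinj : Set.InjOn vertexSet H) {u v w : V}
    (h : (({u, v} : Finset V), w) ∈ H) : (({u, w} : Finset V), v) ∉ H := by
  intro h'
  have hsame : vertexSet (({u, v} : Finset V), w) = vertexSet (({u, w} : Finset V), v) := by
    ext z
    simp only [vertexSet, Finset.mem_insert, Finset.mem_singleton]
    tauto
  have hwv : w = v := (Prod.mk.inj (hinj h h' hsame)).2
  exact (hH.ne_of_mem h).2.2 hwv

end IsTwoToOne

namespace HasPropertyS

theorem eq_or_eq_of_path (hS : HasPropertyS H) (hH : IsTwoToOne H) {x a b c d : V}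
    (h₁ : (({x, a} : Finset V), c) ∈ H) (h₂ : (({x, b} : Finset V), d) ∈ H)
    (hab : a ≠ b) (hcd : c ≠ d) : c = b ∨ d = a := by
  by_contra! hne
  obtain ⟨hxa, hcx, hca⟩ := hH.ne_of_mem h₁
  obtain ⟨hxb, hdx, hdb⟩ := hH.ne_of_mem h₂
  have hmeet : vertexSet (({x, a} : Finset V), c) ∩ vertexSet (({x, b} : Finset V), d) = {x} := by
    ext z
    simp only [vertexSet, Finset.mem_inter, Finset.mem_insert, Finset.mem_singleton]
    grind
  rcases hS _ h₁ _ h₂ x hmeet with h | h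
  · exact hcx h.symm
  · exact hdx h.symm

theorem eq_of_parallel (hS : HasPropertyS H) (hH : IsTwoToOne H) {x y a c c' : V}
    (hc : (({x, y} : Finset V), c) ∈ H) (hc' : (({x, y} : Finset V), c') ∈ H) (hcc' : c ≠ c')
    (he : (({x, a} : Finset V), c) ∈ H) (hay : a ≠ y) : a = c' :=
  ((hS.eq_or_eq_of_path hH he hc' hay hcc').resolve_left (hH.ne_of_mem hc).2.2).symm

theorem side_edge_mem_of_witness (hS : HasPropertyS H) (hH : IsTwoToOne H) {x y c c' : V}
    (hc : (({x, y} : Finset V), c) ∈ H) (hc' : (({x, y} : Finset V), c') ∈ H) (hcc' : c ≠ c')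
    {e : Finset V × V} (he : e ∈ H) (hne : e ≠ (({x, y} : Finset V), c)) (hlabel : e.2 = c)
    (hinc : x ∈ e.1 ∨ y ∈ e.1) :
    (({x, c'} : Finset V), c) ∈ H ∨ (({y, c'} : Finset V), c) ∈ H := by
  obtain ⟨P, c₀⟩ := e
  obtain rfl : c₀ = c := hlabel
  rcases hinc with hx | hy
  · obtain ⟨a, rfl⟩ := Finset.exists_eq_pair_of_mem_of_card_eq_two (hH _ he).1 hx
    have hay : a ≠ y := by rintro rfl; exact hne rfl
    left
    rwa [← hS.eq_of_parallel hH hc hc' hcc' he hay]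
  · obtain ⟨b, rfl⟩ := Finset.exists_eq_pair_of_mem_of_card_eq_two (hH _ he).1 hy
    have hbx : b ≠ x := by rintro rfl; exact hne (by rw [Finset.pair_comm])
    rw [Finset.pair_comm] at hc hc'
    right
    rwa [← hS.eq_of_parallel hH hc hc' hcc' he hbx]

theorem edge_at_left_cases (hS : HasPropertyS H) (hH : IsTwoToOne H)
    (hinj : Set.InjOn vertexSet H) {x y r q a c : V}
    (hr : (({x, y} : Finset V), r) ∈ H) (hq : (({x, y} : Finset V), q) ∈ H)
    (hxq : (({x, q} : Finset V), r) ∈ H) (he : (({x, a} : Finset V), c) ∈ H) :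
    a = y ∧ (c = r ∨ c = q) ∨ a = q ∧ c = r := by
  obtain ⟨-, -, hry⟩ := hH.ne_of_mem hr
  obtain ⟨-, -, hqy⟩ := hH.ne_of_mem hq
  obtain ⟨-, -, hrq⟩ := hH.ne_of_mem hxq
  by_cases hay : a = y
  · subst hay
    refine .inl ⟨rfl, ?_⟩
    by_contra! hc
    rcases hS.eq_or_eq_of_path hH he hxq hqy.symm hc.1 with h | h
    · exact hc.2 h
    · exact hry h
  by_cases haq : a = q
  · subst haq
    refine .inr ⟨rfl, ?_⟩
    by_contra hcr
    rcases hS.eq_or_eq_of_path hH he hr hay hcr with rfl | rfl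
    · exact hH.swap_label_not_mem hinj hq he
    · exact hrq rfl
  exfalso
  by_cases hcr : c = r
  · subst hcr
    rcases hS.eq_or_eq_of_path hH he hq hay hrq with h | h
    · exact hry h
    · exact haq h.symm
  by_cases hcq : c = q
  · subst hcq
    rcases hS.eq_or_eq_of_path hH he hr hay hcr with h | rfl
    · exact hqy h
    · exact hH.swap_label_not_mem hinj hxq he
  rcases hS.eq_or_eq_of_path hH he hq hay hcq with rfl | h
  · rcases hS.eq_or_eq_of_path hH he hxq haq hcr with h | rfl
    · exact hqy h.symm
    · exact hH.swap_label_not_mem hinj hr he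
  · exact haq h.symm

theorem eq_of_incident (hS : HasPropertyS H) (hH : IsTwoToOne H)
    (hinj : Set.InjOn vertexSet H) {x y r q : V}
    (hr : (({x, y} : Finset V), r) ∈ H) (hq : (({x, y} : Finset V), q) ∈ H)
    (hxq : (({x, q} : Finset V), r) ∈ H) (hyr : (({y, r} : Finset V), q) ∈ H)
    {e : Finset V × V} (he : e ∈ H) (hinc : x ∈ e.1 ∨ y ∈ e.1) :
    e = (({x, y} : Finset V), r) ∨ e = (({x, y} : Finset V), q) ∨
      e = (({x, q} : Finset V), r) ∨ e = (({y, r} : Finset V), q) := by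
  obtain ⟨P, c⟩ := e
  rcases hinc with hx | hy
  · obtain ⟨a, rfl⟩ := Finset.exists_eq_pair_of_mem_of_card_eq_two (hH _ he).1 hx
    rcases hS.edge_at_left_cases hH hinj hr hq hxq he with ⟨rfl, rfl | rfl⟩ | ⟨rfl, rfl⟩ <;>
      simp
  · obtain ⟨b, rfl⟩ := Finset.exists_eq_pair_of_mem_of_card_eq_two (hH _ he).1 hy
    rw [Finset.pair_comm] at hr hq
    rcases hS.edge_at_left_cases hH hinj hq hr hyr he with ⟨rfl, rfl | rfl⟩ | ⟨rfl, rfl⟩ <;>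
      simp [Finset.pair_comm]

end HasPropertyS

end

theorem stmt16_general {V : Type*} [DecidableEq V] (H : Set (Finset V × V))
    (hedge : ∀ e ∈ H, e.1.card = 2 ∧ e.2 ∉ e.1)
    (huniq : ∀ e₁ ∈ H, ∀ e₂ ∈ H, insert e₁.2 e₁.1 = insert e₂.2 e₂.1 → e₁ = e₂)
    (hS : ∀ e₁ ∈ H, ∀ e₂ ∈ H, ∀ v : V,
      (insert e₁.2 e₁.1) ∩ (insert e₂.2 e₂.1) = {v} → v = e₁.2 ∨ v = e₂.2)
    (x y : V)
    (c₁ c₂ : V) (hc : c₁ ≠ c₂)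
    (h1 : (({x, y} : Finset V), c₁) ∈ H) (h2 : (({x, y} : Finset V), c₂) ∈ H)
    (hstrong : ∀ c : V, (({x, y} : Finset V), c) ∈ H →
      ∃ e ∈ H, e ≠ (({x, y} : Finset V), c) ∧ e.2 = c ∧ (x ∈ e.1 ∨ y ∈ e.1)) :
    ∃ r q : V, r ≠ q ∧
      (({x, y} : Finset V), r) ∈ H ∧ (({x, y} : Finset V), q) ∈ H ∧
      (({x, q} : Finset V), r) ∈ H ∧ (({y, r} : Finset V), q) ∈ H ∧
      (∀ c : V, (({x, y} : Finset V), c) ∈ H → c = r ∨ c = q) ∧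
      (∀ e ∈ H, x ∈ e.1 ∨ y ∈ e.1 →
        e = (({x, y} : Finset V), r) ∨ e = (({x, y} : Finset V), q) ∨
        e = (({x, q} : Finset V), r) ∨ e = (({y, r} : Finset V), q)) := by
  have hH : IsTwoToOne H := hedge
  have hinj : Set.InjOn vertexSet H := huniq
  have hS : HasPropertyS H := hS
  have hside : ∀ c c', c ≠ c' → (({x, y} : Finset V), c) ∈ H → (({x, y} : Finset V), c') ∈ H →
      (({x, c'} : Finset V), c) ∈ H ∨ (({y, c'} : Finset V), c) ∈ H := by
    intro c c' hcc' hc hc'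
    obtain ⟨e, he, hne, hlabel, hinc⟩ := hstrong c hc
    exact hS.side_edge_mem_of_witness hH hc hc' hcc' he hne hlabel hinc
  obtain ⟨r, q, hr, hq, hxq, hyr⟩ : ∃ r q, (({x, y} : Finset V), r) ∈ H ∧
      (({x, y} : Finset V), q) ∈ H ∧ (({x, q} : Finset V), r) ∈ H ∧
      (({y, r} : Finset V), q) ∈ H := by
    rcases hside c₁ c₂ hc h1 h2 with hx₁ | hy₁ <;> rcases hside c₂ c₁ hc.symm h2 h1 with hx₂ | hy₂
    · exact (hH.swap_label_not_mem hinj hx₁ hx₂).elim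
    · exact ⟨c₁, c₂, h1, h2, hx₁, hy₂⟩
    · exact ⟨c₂, c₁, h2, h1, hx₂, hy₁⟩
    · exact (hH.swap_label_not_mem hinj hy₁ hy₂).elim
  refine ⟨r, q, (hH.ne_of_mem hxq).2.2, hr, hq, hxq, hyr, fun c hc => ?_,
    fun e he hinc => hS.eq_of_incident hH hinj hr hq hxq hyr he hinc⟩
  rcases hS.edge_at_left_cases hH hinj hr hq hxq hc with ⟨-, hc⟩ | ⟨hyq, -⟩
  · exact hc
  · exact absurd hyq (hH.ne_of_mem hq).2.2.symm

/-- In the labeled multigraph of a `2→1` hypergraph with Property S and at most one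
hyperedge per 3-set: if `{x,y}` is a strong overloaded pair, then there are exactly two
parallel edges on `{x,y}`, with labels `r` and `q`, the only other edges incident to
`x` or `y` are an edge `xq` with label `r` and an edge `yr` with label `q`, and no
further edges are incident to `x` or `y`. -/
theorem stmt16 {V : Type*} [DecidableEq V] (H : Set (Finset V × V))
    (hedge : ∀ e ∈ H, e.1.card = 2 ∧ e.2 ∉ e.1)
    (huniq : ∀ e₁ ∈ H, ∀ e₂ ∈ H, insert e₁.2 e₁.1 = insert e₂.2 e₂.1 → e₁ = e₂)
    (hS : ∀ e₁ ∈ H, ∀ e₂ ∈ H, ∀ v : V,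
      (insert e₁.2 e₁.1) ∩ (insert e₂.2 e₂.1) = {v} → v = e₁.2 ∨ v = e₂.2)
    (x y : V) (hxy : x ≠ y)
    (c₁ c₂ : V) (hc : c₁ ≠ c₂)
    (h1 : (({x, y} : Finset V), c₁) ∈ H) (h2 : (({x, y} : Finset V), c₂) ∈ H)
    (hstrong : ∀ c : V, (({x, y} : Finset V), c) ∈ H →
      ∃ e ∈ H, e ≠ (({x, y} : Finset V), c) ∧ e.2 = c ∧ (x ∈ e.1 ∨ y ∈ e.1)) :
    ∃ r q : V, r ≠ q ∧
      (({x, y} : Finset V), r) ∈ H ∧ (({x, y} : Finset V), q) ∈ H ∧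
      (({x, q} : Finset V), r) ∈ H ∧ (({y, r} : Finset V), q) ∈ H ∧
      (∀ c : V, (({x, y} : Finset V), c) ∈ H → c = r ∨ c = q) ∧
      (∀ e ∈ H, x ∈ e.1 ∨ y ∈ e.1 →
        e = (({x, y} : Finset V), r) ∨ e = (({x, y} : Finset V), q) ∨
        e = (({x, q} : Finset V), r) ∨ e = (({y, r} : Finset V), q)) :=
  stmt16_general H hedge huniq hS x y c₁ c₂ hc h1 h2 hstrong
end

section
/- Any 2→1 hypergraph H on a finite vertex set in which no two hyperedges intersect in exactly one vertex that is a tail-vertex of both of them, and which is linear (any two hyperedges share at most one vertex), admits a proper 2-coloring. -/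
/-!
No vertex lies in the tails of two distinct hyperedges: if it did, linearity would make it
their unique common vertex, and it would be a tail-vertex of both. So the tails
are pairwise disjoint, and colouring one chosen vertex of every tail `true` and everything else
`false` leaves each tail, hence each hyperedge, non-monochromatic.
-/

theorem Set.PairwiseDisjoint.exists_bool_ne {ι V : Type*} {s : Set ι} {t : ι → Finset V}
    (hd : s.PairwiseDisjoint t) (ht : ∀ i ∈ s, 1 < (t i).card) :
    ∃ f : V → Bool, ∀ i ∈ s, ∃ u ∈ t i, ∃ w ∈ t i, f u ≠ f w := by
  classical
  choose a ha using fun i (hi : i ∈ s) => Finset.card_pos.mp (one_pos.trans (ht i hi))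
  refine ⟨fun v => decide (∃ i, ∃ hi : i ∈ s, a i hi = v), fun i hi => ?_⟩
  obtain ⟨w, hw, hwa⟩ := Finset.exists_mem_ne (ht i hi) (a i hi)
  have hw_unchosen : ¬ ∃ j, ∃ hj : j ∈ s, a j hj = w := by
    rintro ⟨j, hj, rfl⟩
    obtain rfl : j = i := hd.elim_finset hj hi (a j hj) (ha j hj) hw
    exact hwa rfl
  exact ⟨a i hi, ha i hi, w, hw, by
    simp only [ne_eq, decide_eq_decide]
    exact fun h => hw_unchosen (h.mp ⟨i, hi, rfl⟩)⟩

theorem pairwiseDisjoint_tails_of_linear {V : Type*} [DecidableEq V] {E : Finset (Finset V × V)}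
    (hlin : ∀ e₁ ∈ E, ∀ e₂ ∈ E, e₁ ≠ e₂ →
      ((insert e₁.2 e₁.1) ∩ (insert e₂.2 e₂.1)).card ≤ 1)
    (hint : ∀ e₁ ∈ E, ∀ e₂ ∈ E, ∀ v : V,
      (insert e₁.2 e₁.1) ∩ (insert e₂.2 e₂.1) = {v} → ¬ (v ∈ e₁.1 ∧ v ∈ e₂.1)) :
    (E : Set (Finset V × V)).PairwiseDisjoint Prod.fst := by
  intro e₁ h₁ e₂ h₂ hne
  rw [Function.onFun, Finset.disjoint_left]
  intro v hv₁ hv₂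
  have hv : v ∈ (insert e₁.2 e₁.1) ∩ (insert e₂.2 e₂.1) :=
    Finset.mem_inter.mpr ⟨Finset.mem_insert_of_mem hv₁, Finset.mem_insert_of_mem hv₂⟩
  have hsingleton : (insert e₁.2 e₁.1) ∩ (insert e₂.2 e₂.1) = {v} :=
    Finset.eq_singleton_iff_unique_mem.mpr
      ⟨hv, fun w hw => Finset.card_le_one.mp (hlin e₁ h₁ e₂ h₂ hne) w hw v hv⟩
  exact hint e₁ h₁ e₂ h₂ v hsingleton ⟨hv₁, hv₂⟩

theorem stmt17_general {V : Type*} [DecidableEq V]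
    (E : Finset (Finset V × V))
    (hedge : ∀ e ∈ E, e.1.card = 2 ∧ e.2 ∉ e.1)
    (hlin : ∀ e₁ ∈ E, ∀ e₂ ∈ E, e₁ ≠ e₂ →
      ((insert e₁.2 e₁.1) ∩ (insert e₂.2 e₂.1)).card ≤ 1)
    (hint : ∀ e₁ ∈ E, ∀ e₂ ∈ E, ∀ v : V,
      (insert e₁.2 e₁.1) ∩ (insert e₂.2 e₂.1) = {v} → ¬ (v ∈ e₁.1 ∧ v ∈ e₂.1)) :
    ∃ f : V → Bool, ∀ e ∈ E,
      ∃ u ∈ insert e.2 e.1, ∃ w ∈ insert e.2 e.1, f u ≠ f w := by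
  obtain ⟨f, hf⟩ := (pairwiseDisjoint_tails_of_linear hlin hint).exists_bool_ne
    fun e he => by simp [(hedge e he).1]
  refine ⟨f, fun e he => ?_⟩
  obtain ⟨u, hu, w, hw, hfuw⟩ := hf e he
  exact ⟨u, Finset.mem_insert_of_mem hu, w, Finset.mem_insert_of_mem hw, hfuw⟩

/-- A linear `2→1` hypergraph (distinct hyperedges share at most one vertex) in which
no two hyperedges intersect in exactly one vertex that is a tail-vertex of both
admits a proper 2-coloring. -/
theorem stmt17 {V : Type*} [Fintype V] [DecidableEq V]
    (E : Finset (Finset V × V))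
    (hedge : ∀ e ∈ E, e.1.card = 2 ∧ e.2 ∉ e.1)
    (hlin : ∀ e₁ ∈ E, ∀ e₂ ∈ E, e₁ ≠ e₂ →
      ((insert e₁.2 e₁.1) ∩ (insert e₂.2 e₂.1)).card ≤ 1)
    (hint : ∀ e₁ ∈ E, ∀ e₂ ∈ E, ∀ v : V,
      (insert e₁.2 e₁.1) ∩ (insert e₂.2 e₂.1) = {v} → ¬ (v ∈ e₁.1 ∧ v ∈ e₂.1)) :
    ∃ f : V → Bool, ∀ e ∈ E,
      ∃ u ∈ insert e.2 e.1, ∃ w ∈ insert e.2 e.1, f u ≠ f w :=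
  stmt17_general E hedge hlin hint
end

section
/- Let H be a hypergraph in which every hyperedge has size at least 2 and every pair of distinct hyperedges has empty intersection or intersects in at least 2 vertices. Suppose additionally every hyperedge has size at least c and every family of at most c hyperedges with nonempty common intersection meets in at least c vertices. Then in any 2-coloring of the vertices, the number of monochromatic hyperedges can be strictly decreased by recoloring a single vertex, unless the coloring is already proper. In particular, a coloring minimizing the number of monochromatic hyperedges is proper. -/
/-!
Let `e₀` be a monochromatic hyperedge and recolor one of its vertices `v`. Then `e₀` stops being
monochromatic, and no hyperedge `e` becomes monochromatic: if `v ∉ e` the colors on `e` are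
unchanged, and if `v ∈ e` then `e` meets `e₀` in a second vertex `w`, which keeps the old color
of `v` while `v` now has the new one.
-/

open Finset Function

lemma Finset.apply_eq_of_card_image_le_one {α β : Type*} [DecidableEq β] {s : Finset α}
    {f : α → β} (h : #(s.image f) ≤ 1) {x y : α} (hx : x ∈ s) (hy : y ∈ s) : f x = f y :=
  card_le_one_iff.1 h (mem_image_of_mem f hx) (mem_image_of_mem f hy)

section Recoloring

variable {α β : Type*} [DecidableEq α] [DecidableEq β]

def monochromaticEdges (E : Finset (Finset α)) (f : α → β) : Finset (Finset α) :=
  E.filter fun e => #(e.image f) = 1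

lemma Finset.image_update_of_notMem {e : Finset α} {v : α} (hv : v ∉ e) (f : α → β) (b : β) :
    e.image (update f v b) = e.image f :=
  image_congr fun _ hx => update_of_ne (ne_of_mem_of_not_mem hx hv) b f

lemma card_image_update_ne_one {e e₀ : Finset α} {f : α → β} {v : α} {b : β} (hb : b ≠ f v)
    (hv : v ∈ e) (he₀ : #(e₀.image f) = 1) (hv₀ : v ∈ e₀) (hinter : 2 ≤ #(e ∩ e₀)) :
    #(e.image (update f v b)) ≠ 1 := by
  intro he
  obtain ⟨w, hw, hwv⟩ := exists_mem_ne hinter v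
  rw [mem_inter] at hw
  have hfw : f w = f v := apply_eq_of_card_image_le_one he₀.le hw.2 hv₀
  have hgw : update f v b w = update f v b v := apply_eq_of_card_image_le_one he.le hw.1 hv
  rw [update_of_ne hwv, update_self] at hgw
  exact hb (hgw.symm.trans hfw)

theorem monochromaticEdges_update_ssubset {E : Finset (Finset α)} {e₀ : Finset α} {f : α → β}
    {v : α} {b : β} (he₀ : e₀ ∈ monochromaticEdges E f) (hv₀ : v ∈ e₀) (hb : b ≠ f v)
    (hinter : ∀ e ∈ E, v ∈ e → 2 ≤ #(e ∩ e₀)) :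
    monochromaticEdges E (update f v b) ⊂ monochromaticEdges E f := by
  rw [monochromaticEdges, mem_filter] at he₀
  have not_mono : ∀ e ∈ E, v ∈ e → #(e.image (update f v b)) ≠ 1 := fun e he hv =>
    card_image_update_ne_one hb hv he₀.2 hv₀ (hinter e he hv)
  have hsub : monochromaticEdges E (update f v b) ⊆ monochromaticEdges E f := by
    intro e
    simp only [monochromaticEdges, mem_filter]
    rintro ⟨he, hmono⟩
    by_cases hv : v ∈ e
    · exact absurd hmono (not_mono e he hv)
    · exact ⟨he, image_update_of_notMem hv f b ▸ hmono⟩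
  refine (ssubset_iff_of_subset hsub).2 ⟨e₀, mem_filter.2 he₀, fun h => ?_⟩
  exact not_mono e₀ he₀.1 hv₀ (mem_filter.1 h).2

lemma two_le_card_inter_of_mem {E : Finset (Finset α)}
    (hsize2 : ∀ e ∈ E, 2 ≤ #e)
    (hpair : ∀ e₁ ∈ E, ∀ e₂ ∈ E, e₁ ≠ e₂ → e₁ ∩ e₂ = ∅ ∨ 2 ≤ #(e₁ ∩ e₂))
    {e e₀ : Finset α} (he : e ∈ E) (he₀ : e₀ ∈ E) {v : α} (hv : v ∈ e) (hv₀ : v ∈ e₀) :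
    2 ≤ #(e ∩ e₀) := by
  by_cases h : e = e₀
  · subst h
    simpa using hsize2 e he
  · exact (hpair e he e₀ he₀ h).resolve_left (ne_empty_of_mem (mem_inter.2 ⟨hv, hv₀⟩))

theorem exists_card_monochromaticEdges_update_lt {E : Finset (Finset α)}
    (hsize2 : ∀ e ∈ E, 2 ≤ #e)
    (hpair : ∀ e₁ ∈ E, ∀ e₂ ∈ E, e₁ ≠ e₂ → e₁ ∩ e₂ = ∅ ∨ 2 ≤ #(e₁ ∩ e₂))
    {f : α → β} (hmono : (monochromaticEdges E f).Nonempty) :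
    ∃ v, ∀ b ≠ f v, #(monochromaticEdges E (update f v b)) < #(monochromaticEdges E f) := by
  obtain ⟨e₀, he₀⟩ := hmono
  have he₀E : e₀ ∈ E := (mem_filter.1 he₀).1
  obtain ⟨v, hv₀⟩ := card_pos.1 (lt_of_lt_of_le two_pos (hsize2 e₀ he₀E))
  refine ⟨v, fun b hb => card_lt_card ?_⟩
  exact monochromaticEdges_update_ssubset he₀ hv₀ hb fun e he hv =>
    two_le_card_inter_of_mem hsize2 hpair he he₀E hv hv₀

end Recoloring

theorem stmt18_general {V : Type*} [DecidableEq V]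
    (E : Finset (Finset V))
    (hsize2 : ∀ e ∈ E, 2 ≤ e.card)
    (hpair : ∀ e₁ ∈ E, ∀ e₂ ∈ E, e₁ ≠ e₂ → e₁ ∩ e₂ = ∅ ∨ 2 ≤ (e₁ ∩ e₂).card) :
    (∀ f : V → Bool, (∃ e ∈ E, (e.image f).card = 1) →
      ∃ v : V,
        (E.filter (fun e => (e.image (Function.update f v (!(f v)))).card = 1)).card <
        (E.filter (fun e => (e.image f).card = 1)).card) ∧
    (∀ f : V → Bool,
      (∀ g : V → Bool,
        (E.filter (fun e => (e.image f).card = 1)).card ≤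
        (E.filter (fun e => (e.image g).card = 1)).card) →
      ∀ e ∈ E, (e.image f).card ≠ 1) := by
  have recolor : ∀ f : V → Bool, (∃ e ∈ E, (e.image f).card = 1) → ∃ v : V,
      #(monochromaticEdges E (update f v (!(f v)))) < #(monochromaticEdges E f) := by
    rintro f ⟨e, he, hmono⟩
    obtain ⟨v, hv⟩ :=
      exists_card_monochromaticEdges_update_lt hsize2 hpair ⟨e, mem_filter.2 ⟨he, hmono⟩⟩
    exact ⟨v, hv _ (Bool.not_ne_self _)⟩
  refine ⟨recolor, fun f hmin e he hmono => ?_⟩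
  obtain ⟨v, hv⟩ := recolor f ⟨e, he, hmono⟩
  exact (hmin _).not_gt hv

/-- Recoloring lemma: in a hypergraph where every hyperedge has size at least 2 and
`c`, distinct hyperedges intersect in 0 or at least 2 vertices, and every family of at
most `c` hyperedges with nonempty common intersection meets in at least `c` vertices,
for every 2-coloring that has a monochromatic hyperedge some single-vertex recoloring
strictly decreases the number of monochromatic hyperedges; in particular a coloring
minimizing the number of monochromatic hyperedges is proper. -/
theorem stmt18 {V : Type*} [Fintype V] [DecidableEq V]
    (c : ℕ) (E : Finset (Finset V))
    (hsize2 : ∀ e ∈ E, 2 ≤ e.card)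
    (hpair : ∀ e₁ ∈ E, ∀ e₂ ∈ E, e₁ ≠ e₂ → e₁ ∩ e₂ = ∅ ∨ 2 ≤ (e₁ ∩ e₂).card)
    (hsizec : ∀ e ∈ E, c ≤ e.card)
    (hc : ∀ S : Finset (Finset V), S ⊆ E → S.Nonempty → S.card ≤ c →
      (S.inf id).Nonempty → c ≤ (S.inf id).card) :
    (∀ f : V → Bool, (∃ e ∈ E, (e.image f).card = 1) →
      ∃ v : V,
        (E.filter (fun e => (e.image (Function.update f v (!(f v)))).card = 1)).card <
        (E.filter (fun e => (e.image f).card = 1)).card) ∧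
    (∀ f : V → Bool,
      (∀ g : V → Bool,
        (E.filter (fun e => (e.image f).card = 1)).card ≤
        (E.filter (fun e => (e.image g).card = 1)).card) →
      ∀ e ∈ E, (e.image f).card ≠ 1) :=
  stmt18_general E hsize2 hpair
end

section
/- Every 2→1 hypergraph H on vertex set {1,...,n} in which every hyperedge ab→c satisfies c < max(a,b), and which contains at most one hyperedge per 3-element set, has at most binom(n,3) hyperedges; and the hypergraph consisting of one hyperedge ik→j for each triple i<j<k achieves binom(n,3) hyperedges while avoiding the configuration F = {12→3, 13→4, 23→5, 14→2, 25→1}. Hence ex_o(n, F) = binom(n,3). -/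
/-!
Sending a hyperedge `ab→c` to its vertex set `{a, b, c}` is injective on an oriented
hypergraph, which gives the upper bound `binom(n,3)`. The extremal hypergraph `E` has exactly one
hyperedge on every triple `i < j < k`, namely the one whose head `j` lies strictly between its
two tails. A copy of `F` in `E` is impossible: `12→3` puts `3` between `1` and `2`, `13→4` puts
`4` between `1` and `3`, hence between `1` and `2`, and then `14→2` would need `2` between
`1` and `4`.
-/

open Finset

variable {α : Type*}

theorem card_le_choose_three_of_injOn [DecidableEq α] [Fintype α]
    {H : Finset (Finset α × α)} (hedge : ∀ e ∈ H, e.1.card = 2 ∧ e.2 ∉ e.1)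
    (horient : Set.InjOn (fun e : Finset α × α ↦ insert e.2 e.1) H) :
    H.card ≤ (Fintype.card α).choose 3 := by
  rw [← card_univ, ← card_powersetCard]
  refine card_le_card_of_injOn _ (fun e he ↦ ?_) horient
  obtain ⟨htail, hhead⟩ := hedge e he
  simp [card_insert_of_notMem hhead, htail]

section LinearOrder

variable [LinearOrder α]

theorem card_insert_pair_of_lt {a b c : α} (hab : a < b) (hbc : b < c) :
    (insert b {a, c} : Finset α).card = 3 :=
  card_eq_three.2 ⟨b, a, c, hab.ne', hbc.ne, (hab.trans hbc).ne, rfl⟩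

theorem isLeast_insert_pair {a b c : α} (hab : a < b) (hbc : b < c) :
    IsLeast (↑(insert b {a, c} : Finset α)) a := by
  refine ⟨by simp, ?_⟩
  simp only [coe_insert, coe_singleton, mem_lowerBounds, Set.mem_insert_iff,
    Set.mem_singleton_iff]
  rintro x (rfl | rfl | rfl) <;> order

theorem isGreatest_insert_pair {a b c : α} (hab : a < b) (hbc : b < c) :
    IsGreatest (↑(insert b {a, c} : Finset α)) c := by
  refine ⟨by simp, ?_⟩
  simp only [coe_insert, coe_singleton, mem_upperBounds, Set.mem_insert_iff,
    Set.mem_singleton_iff]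
  rintro x (rfl | rfl | rfl) <;> order

theorem eq_of_insert_pair_eq {a b c a' b' c' : α} (hab : a < b) (hbc : b < c)
    (hab' : a' < b') (hbc' : b' < c') (h : insert b {a, c} = (insert b' {a', c'} : Finset α)) :
    a = a' ∧ b = b' ∧ c = c' := by
  have ha : a = a' := (isLeast_insert_pair hab hbc).unique (h ▸ isLeast_insert_pair hab' hbc')
  have hc : c = c' :=
    (isGreatest_insert_pair hab hbc).unique (h ▸ isGreatest_insert_pair hab' hbc')
  have hb : b ∈ insert b' {a', c'} := h ▸ mem_insert_self b _
  simp only [mem_insert, mem_singleton] at hb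
  refine ⟨ha, ?_, hc⟩
  rcases hb with hb | hb | hb <;> order

theorem exists_lt_lt_insert_pair_eq {s : Finset α} (hs : s.card = 3) :
    ∃ a b c, a < b ∧ b < c ∧ insert b {a, c} = s := by
  set f := s.orderEmbOfFin hs
  have h01 : f 0 < f 1 := f.lt_iff_lt.2 (by decide)
  have h12 : f 1 < f 2 := f.lt_iff_lt.2 (by decide)
  refine ⟨f 0, f 1, f 2, h01, h12, eq_of_subset_of_card_le ?_ ?_⟩
  · simp [insert_subset_iff, f, orderEmbOfFin_mem]
  · rw [hs, card_insert_pair_of_lt h01 h12]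

theorem card_eq_choose_three_of_forall_mem_iff [Fintype α] {E : Finset (Finset α × α)}
    (hE : ∀ e, e ∈ E ↔ ∃ i j k : α, i < j ∧ j < k ∧ e = (({i, k} : Finset α), j)) :
    E.card = (Fintype.card α).choose 3 := by
  rw [← card_univ, ← card_powersetCard]
  refine card_nbij (fun e ↦ insert e.2 e.1) (fun e he ↦ ?_) (fun e he e' he' h ↦ ?_)
    (fun s hs ↦ ?_)
  · obtain ⟨i, j, k, hij, hjk, rfl⟩ := (hE e).1 he
    simpa using card_insert_pair_of_lt hij hjk
  · obtain ⟨i, j, k, hij, hjk, rfl⟩ := (hE e).1 he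
    obtain ⟨i', j', k', hij', hjk', rfl⟩ := (hE e').1 he'
    obtain ⟨rfl, rfl, rfl⟩ := eq_of_insert_pair_eq hij hjk hij' hjk' h
    rfl
  · obtain ⟨i, j, k, hij, hjk, hs⟩ := exists_lt_lt_insert_pair_eq (mem_powersetCard.1 hs).2
    exact ⟨({i, k}, j), (hE _).2 ⟨i, j, k, hij, hjk, rfl⟩, hs⟩

theorem lt_and_lt_or_lt_and_lt_of_mem {E : Finset (Finset α × α)}
    (hE : ∀ e, e ∈ E ↔ ∃ i j k : α, i < j ∧ j < k ∧ e = (({i, k} : Finset α), j))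
    {x y z : α} (h : (({x, y} : Finset α), z) ∈ E) :
    x < z ∧ z < y ∨ y < z ∧ z < x := by
  obtain ⟨i, j, k, hij, hjk, heq⟩ := (hE _).1 h
  obtain ⟨htails, rfl⟩ := Prod.mk.inj heq
  have hpair : ({x, y} : Set α) = {i, k} := by rw [← coe_pair, htails, coe_pair]
  rcases Set.pair_eq_pair_iff.1 hpair with ⟨rfl, rfl⟩ | ⟨rfl, rfl⟩
  · exact Or.inl ⟨hij, hjk⟩
  · exact Or.inr ⟨hij, hjk⟩

end LinearOrder

theorem stmt19_general (n : ℕ) (H : Finset (Finset (Fin n) × Fin n))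
    (hedge : ∀ e ∈ H, e.1.card = 2 ∧ e.2 ∉ e.1)
    (horient : ∀ e₁ ∈ H, ∀ e₂ ∈ H, insert e₁.2 e₁.1 = insert e₂.2 e₂.1 → e₁ = e₂)
    (E : Finset (Finset (Fin n) × Fin n))
    (hE : ∀ e, e ∈ E ↔ ∃ i j k : Fin n, i < j ∧ j < k ∧
      e = (({i, k} : Finset (Fin n)), j)) :
    H.card ≤ Nat.choose n 3 ∧
    E.card = Nat.choose n 3 ∧
    ¬ ∃ v : Fin 5 → Fin n, Function.Injective v ∧
      (({v 0, v 1} : Finset (Fin n)), v 2) ∈ E ∧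
      (({v 0, v 2} : Finset (Fin n)), v 3) ∈ E ∧
      (({v 1, v 2} : Finset (Fin n)), v 4) ∈ E ∧
      (({v 0, v 3} : Finset (Fin n)), v 1) ∈ E ∧
      (({v 1, v 4} : Finset (Fin n)), v 0) ∈ E := by
  refine ⟨?_, ?_, ?_⟩
  · simpa using card_le_choose_three_of_injOn hedge horient
  · simpa using card_eq_choose_three_of_forall_mem_iff hE
  · rintro ⟨v, -, h012, h023, -, h031, -⟩
    have b012 := lt_and_lt_or_lt_and_lt_of_mem hE h012
    have b023 := lt_and_lt_or_lt_and_lt_of_mem hE h023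
    have b031 := lt_and_lt_or_lt_and_lt_of_mem hE h031
    omega

/-- Every oriented `2→1` hypergraph on `n` vertices (at most one hyperedge per
3-element vertex set) in which every hyperedge `ab→c` satisfies `c < max a b` has at
most `binom(n,3)` hyperedges; and the hypergraph with one hyperedge `ik→j` for each
triple `i<j<k` achieves `binom(n,3)` hyperedges while avoiding the configuration
`F = {12→3, 13→4, 23→5, 14→2, 25→1}`. Hence `ex_o(n,F) = binom(n,3)`. -/
theorem stmt19 (n : ℕ) (H : Finset (Finset (Fin n) × Fin n))
    (hedge : ∀ e ∈ H, e.1.card = 2 ∧ e.2 ∉ e.1)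
    (hmax : ∀ a b c : Fin n, (({a, b} : Finset (Fin n)), c) ∈ H → c < max a b)
    (horient : ∀ e₁ ∈ H, ∀ e₂ ∈ H, insert e₁.2 e₁.1 = insert e₂.2 e₂.1 → e₁ = e₂)
    (E : Finset (Finset (Fin n) × Fin n))
    (hE : ∀ e, e ∈ E ↔ ∃ i j k : Fin n, i < j ∧ j < k ∧
      e = (({i, k} : Finset (Fin n)), j)) :
    H.card ≤ Nat.choose n 3 ∧
    E.card = Nat.choose n 3 ∧
    ¬ ∃ v : Fin 5 → Fin n, Function.Injective v ∧
      (({v 0, v 1} : Finset (Fin n)), v 2) ∈ E ∧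
      (({v 0, v 2} : Finset (Fin n)), v 3) ∈ E ∧
      (({v 1, v 2} : Finset (Fin n)), v 4) ∈ E ∧
      (({v 0, v 3} : Finset (Fin n)), v 1) ∈ E ∧
      (({v 1, v 4} : Finset (Fin n)), v 0) ∈ E :=
  stmt19_general n H hedge horient E hE
end
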